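/- arXiv:math/0407447 — 10 statements merged into one kernel-verified Lean document; each statement's English description precedes it below -/
import Mathlib

section
/- Let Λ ⊆ ℕ × ℕ be a nonempty downward-closed set (if α ∈ Λ and β ≤ α componentwise then β ∈ Λ), let Λ_k = {(i,j) ∈ Λ : i+j = k} and r_k = |Λ_k|, and let ℝ[Λ] denote the linear span of the monomials x₁^i x₂^j with (i,j) ∈ Λ. Fix k ∈ ℕ with Λ_k ≠ ∅ and λ_k ∈ ℝ, and assume the equation 𝒟u = λ_k u has no nonzero polynomial solution in ℝ[Λ] of total degree < k. Then the following are equivalent: (a) the equation 𝒟u = λ_k u has r_k linearly independent polynomial solutions in ℝ[Λ] of total degree at most k; (b) for every (i,j) ∈ Λ_k there is a polynomial solution of 𝒟u = λ_k u of the form P_{i,j}(x) = x₁^i x₂^j + R_{i,j}(x) with R_{i,j} of total degree < k. -/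
open MvPolynomial

noncomputable section

/-- Forward difference in the first variable. -/
def fd1 (u : ℤ × ℤ → ℝ) : ℤ × ℤ → ℝ := fun x => u (x.1 + 1, x.2) - u x

/-- Forward difference in the second variable. -/
def fd2 (u : ℤ × ℤ → ℝ) : ℤ × ℤ → ℝ := fun x => u (x.1, x.2 + 1) - u x

/-- Backward difference in the first variable. -/
def bd1 (u : ℤ × ℤ → ℝ) : ℤ × ℤ → ℝ := fun x => u x - u (x.1 - 1, x.2)

/-- Backward difference in the second variable. -/
def bd2 (u : ℤ × ℤ → ℝ) : ℤ × ℤ → ℝ := fun x => u x - u (x.1, x.2 - 1)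

/-- Evaluation of a two-variable real polynomial on the lattice `ℤ × ℤ`. -/
def pev (p : MvPolynomial (Fin 2) ℝ) : ℤ × ℤ → ℝ :=
  fun x => eval (fun i => if i = 0 then (x.1 : ℝ) else (x.2 : ℝ)) p

/-- The standard second order partial difference operator. -/
def Dop (A11 A12 A21 A22 B1 B2 : MvPolynomial (Fin 2) ℝ) (u : ℤ × ℤ → ℝ) : ℤ × ℤ → ℝ :=
  fun x => pev A11 x * fd1 (bd1 u) x + pev A12 x * fd1 (bd2 u) x
    + pev A21 x * fd2 (bd1 u) x + pev A22 x * fd2 (bd2 u) x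
    + pev B1 x * fd1 u x + pev B2 x * fd2 u x

/-! ### Auxiliary definitions and lemmas -/

/-- The exponent finsupp corresponding to a pair of naturals. -/
def mFor (p : ℕ × ℕ) : Fin 2 →₀ ℕ := Finsupp.single 0 p.1 + Finsupp.single 1 p.2

lemma mFor_zero (p : ℕ × ℕ) : mFor p 0 = p.1 := by
  simp [mFor, Finsupp.single_apply]

lemma mFor_one (p : ℕ × ℕ) : mFor p 1 = p.2 := by
  simp [mFor, Finsupp.single_apply]

lemma eq_mFor (m : Fin 2 →₀ ℕ) : m = mFor (m 0, m 1) := by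
  ext i
  fin_cases i
  · simp [mFor_zero]
  · simp [mFor_one]

lemma mFor_inj {p q : ℕ × ℕ} (h : mFor p = mFor q) : p = q := by
  have h0 : mFor p 0 = mFor q 0 := by rw [h]
  have h1 : mFor p 1 = mFor q 1 := by rw [h]
  simp only [mFor_zero, mFor_one] at h0 h1
  exact Prod.ext h0 h1

lemma monEq (p : ℕ × ℕ) :
    (X 0 ^ p.1 * X 1 ^ p.2 : MvPolynomial (Fin 2) ℝ) = monomial (mFor p) 1 := by
  rw [X_pow_eq_monomial, X_pow_eq_monomial, monomial_mul, one_mul, mFor]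

lemma sumEq (m : Fin 2 →₀ ℕ) : (m.sum fun _ e => e) = m 0 + m 1 := by
  rw [Finsupp.sum_fintype _ _ (fun _ => rfl), Fin.sum_univ_two]

lemma totdeg_le {u : MvPolynomial (Fin 2) ℝ} {k : ℕ}
    (h : ∀ m ∈ u.support, m 0 + m 1 ≤ k) : u.totalDegree ≤ k := by
  rw [MvPolynomial.totalDegree]
  apply Finset.sup_le
  intro m hm
  rw [sumEq]
  exact h m hm

lemma mem_sum_le {u : MvPolynomial (Fin 2) ℝ} {k : ℕ} (hu : u.totalDegree ≤ k)
    {m : Fin 2 →₀ ℕ} (hm : m ∈ u.support) : m 0 + m 1 ≤ k := by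
  have := MvPolynomial.le_totalDegree hm
  rw [sumEq] at this
  omega

/-- The eigenvalue-equation operator, as a linear map. -/
def Eop (A11 A12 A21 A22 B1 B2 : MvPolynomial (Fin 2) ℝ) (lam : ℝ) :
    MvPolynomial (Fin 2) ℝ →ₗ[ℝ] ((ℤ × ℤ) → ℝ) where
  toFun u := fun x => Dop A11 A12 A21 A22 B1 B2 (pev u) x - lam * pev u x
  map_add' u v := by
    funext x
    simp only [Dop, fd1, fd2, bd1, bd2, pev, map_add, Pi.add_apply]
    ring
  map_smul' c u := by
    funext x
    simp only [Dop, fd1, fd2, bd1, bd2, pev, smul_eval, RingHom.id_apply, Pi.smul_apply,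
      smul_eq_mul]
    ring

lemma sol_iff (A11 A12 A21 A22 B1 B2 : MvPolynomial (Fin 2) ℝ) (lam : ℝ)
    (u : MvPolynomial (Fin 2) ℝ) :
    Dop A11 A12 A21 A22 B1 B2 (pev u) = (fun x => lam * pev u x) ↔
      Eop A11 A12 A21 A22 B1 B2 lam u = 0 := by
  constructor
  · intro h; funext x
    simp only [Eop, LinearMap.coe_mk, AddHom.coe_mk, Pi.zero_apply]
    rw [congrFun h x]; ring
  · intro h; funext x
    have := congrFun h x
    simp only [Eop, LinearMap.coe_mk, AddHom.coe_mk, Pi.zero_apply] at this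
    linarith

/-- For a nonempty downward-closed index set `Λ ⊆ ℕ × ℕ`, assuming the
equation `𝒟u = λ_k u` has no nonzero solution in `ℝ[Λ]` of total degree `< k`,
having `r_k` linearly independent solutions in `ℝ[Λ]` of degree `≤ k` is equivalent to
having, for each `(i,j) ∈ Λ_k`, a monic-type solution `x₁^i x₂^j + (lower degree)`. -/
theorem stmt0 (A11 A12 A21 A22 B1 B2 : MvPolynomial (Fin 2) ℝ)
    (Λ : Set (ℕ × ℕ)) (hne : Λ.Nonempty)
    (hdc : ∀ α ∈ Λ, ∀ β : ℕ × ℕ, β.1 ≤ α.1 → β.2 ≤ α.2 → β ∈ Λ)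
    (k : ℕ) (hΛk : {p ∈ Λ | p.1 + p.2 = k}.Nonempty) (lam : ℝ)
    (hnontriv : ∀ u : MvPolynomial (Fin 2) ℝ,
      (∀ m ∈ u.support, ((m 0 : ℕ), (m 1 : ℕ)) ∈ Λ) →
      (∀ m ∈ u.support, m 0 + m 1 < k) →
      Dop A11 A12 A21 A22 B1 B2 (pev u) = (fun x => lam * pev u x) → u = 0) :
    (∃ P : Fin ({p ∈ Λ | p.1 + p.2 = k}.ncard) → MvPolynomial (Fin 2) ℝ,
      LinearIndependent ℝ P ∧
      ∀ i, (∀ m ∈ (P i).support, ((m 0 : ℕ), (m 1 : ℕ)) ∈ Λ) ∧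
        (P i).totalDegree ≤ k ∧
        Dop A11 A12 A21 A22 B1 B2 (pev (P i)) = (fun x => lam * pev (P i) x)) ↔
    (∀ p ∈ Λ, p.1 + p.2 = k →
      ∃ R : MvPolynomial (Fin 2) ℝ,
        (∀ m ∈ R.support, m 0 + m 1 < k) ∧
        (∀ m ∈ (X 0 ^ p.1 * X 1 ^ p.2 + R : MvPolynomial (Fin 2) ℝ).support,
          ((m 0 : ℕ), (m 1 : ℕ)) ∈ Λ) ∧
        Dop A11 A12 A21 A22 B1 B2 (pev (X 0 ^ p.1 * X 1 ^ p.2 + R)) =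
          (fun x => lam * pev (X 0 ^ p.1 * X 1 ^ p.2 + R) x)) := by
  classical
  have hsol := sol_iff A11 A12 A21 A22 B1 B2 lam
  set S := {p ∈ Λ | p.1 + p.2 = k} with hSdef
  have hfin : S.Finite := by
    apply (Set.finite_Iic ((k, k) : ℕ × ℕ)).subset
    rintro ⟨a, b⟩ ⟨-, hab⟩
    simp only [Set.mem_Iic, Prod.mk_le_mk]
    omega
  haveI : Fintype ↥S := hfin.fintype
  have hcard : Fintype.card ↥S = S.ncard := by
    rw [← Nat.card_coe_set_eq, Nat.card_eq_fintype_card]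
  constructor
  · rintro ⟨P, hli, hP⟩ p hpΛ hpk
    have hpS : p ∈ S := ⟨hpΛ, hpk⟩
    have key : ∀ c : Fin S.ncard → ℝ,
        (∀ m ∈ (∑ i, c i • P i).support, ((m 0 : ℕ), (m 1 : ℕ)) ∈ Λ) ∧
        (∀ m ∈ (∑ i, c i • P i).support, m 0 + m 1 ≤ k) ∧
        Eop A11 A12 A21 A22 B1 B2 lam (∑ i, c i • P i) = 0 := by
      intro c
      refine ⟨?_, ?_, ?_⟩
      · intro m hm
        obtain ⟨i, -, hi⟩ := Finset.mem_biUnion.mp (MvPolynomial.support_sum hm)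
        exact (hP i).1 m (MvPolynomial.support_smul hi)
      · intro m hm
        obtain ⟨i, -, hi⟩ := Finset.mem_biUnion.mp (MvPolynomial.support_sum hm)
        exact mem_sum_le (hP i).2.1 (MvPolynomial.support_smul hi)
      · rw [map_sum]
        refine Finset.sum_eq_zero fun i _ => ?_
        rw [map_smul, (hsol (P i)).mp (hP i).2.2, smul_zero]
    let T : (Fin S.ncard → ℝ) →ₗ[ℝ] (↥S → ℝ) :=
      (LinearMap.pi fun q : ↥S => lcoeff ℝ (mFor q.1)) ∘ₗ
        { toFun := fun c => ∑ i, c i • P i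
          map_add' := fun c d => by simp [add_smul, Finset.sum_add_distrib]
          map_smul' := fun a c => by simp [mul_smul, Finset.smul_sum] }
    have hT : ∀ (c : Fin S.ncard → ℝ) (q : ↥S),
        T c q = MvPolynomial.coeff (mFor q.1) (∑ i, c i • P i) := fun c q => rfl
    have hTinj : Function.Injective T := by
      rw [← LinearMap.ker_eq_bot, LinearMap.ker_eq_bot']
      intro c hc
      obtain ⟨hΛu, hdeg, hEu⟩ := key c
      set u := ∑ i, c i • P i with hu
      have hdeg' : ∀ m ∈ u.support, m 0 + m 1 < k := by
        intro m hm
        rcases lt_or_eq_of_le (hdeg m hm) with hlt | heq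
        · exact hlt
        · exfalso
          have hmS : ((m 0 : ℕ), (m 1 : ℕ)) ∈ S := ⟨hΛu m hm, heq⟩
          have hz : coeff (mFor ((m 0 : ℕ), (m 1 : ℕ))) u = 0 := by
            have h2 := congrFun hc ⟨_, hmS⟩
            rw [hT] at h2
            exact h2
          rw [← eq_mFor m] at hz
          exact (MvPolynomial.mem_support_iff.mp hm) hz
      have hu0 : u = 0 := hnontriv u hΛu hdeg' ((hsol u).mpr hEu)
      funext i
      exact Fintype.linearIndependent_iff.mp hli c hu0 i
    have hTsurj : Function.Surjective T := by
      rw [← LinearMap.injective_iff_surjective_of_finrank_eq_finrank (f := T)]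
      · exact hTinj
      · rw [Module.finrank_pi, Module.finrank_pi, Fintype.card_fin, hcard]
    obtain ⟨c, hc⟩ := hTsurj (fun q => if (q : ℕ × ℕ) = p then 1 else 0)
    obtain ⟨hΛu, hdeg, hEu⟩ := key c
    set u := ∑ i, c i • P i with hu
    have hcoef : ∀ q : ↥S, coeff (mFor q.1) u = if (q : ℕ × ℕ) = p then 1 else 0 := by
      intro q
      rw [← hT c q, hc]
    have hurw : X 0 ^ p.1 * X 1 ^ p.2 + (u - X 0 ^ p.1 * X 1 ^ p.2) = u := by ring
    refine ⟨u - X 0 ^ p.1 * X 1 ^ p.2, ?_, ?_, ?_⟩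
    · intro m hm
      have hcm : coeff m (u - X 0 ^ p.1 * X 1 ^ p.2) ≠ 0 :=
        MvPolynomial.mem_support_iff.mp hm
      rw [MvPolynomial.coeff_sub, monEq, MvPolynomial.coeff_monomial] at hcm
      by_cases hmp : m = mFor p
      · exfalso
        apply hcm
        rw [if_pos hmp.symm, hmp, hcoef ⟨p, hpS⟩, if_pos rfl]
        ring
      · rw [if_neg (fun hh => hmp hh.symm), sub_zero] at hcm
        have hmu : m ∈ u.support := MvPolynomial.mem_support_iff.mpr hcm
        rcases lt_or_eq_of_le (hdeg m hmu) with hlt | heq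
        · exact hlt
        · exfalso
          have hmS : ((m 0 : ℕ), (m 1 : ℕ)) ∈ S := ⟨hΛu m hmu, heq⟩
          have hne' : ((m 0 : ℕ), (m 1 : ℕ)) ≠ p := by
            intro hEq
            apply hmp
            rw [eq_mFor m, hEq]
          have := hcoef ⟨_, hmS⟩
          rw [if_neg hne'] at this
          rw [eq_mFor m] at hcm
          exact hcm this
    · rw [hurw]
      exact hΛu
    · rw [hurw]
      exact (hsol u).mpr hEu
  · intro h
    choose R hRdeg hRsup hRsol using fun q : ↥S => h q.1 q.2.1 q.2.2
    let e : ↥S ≃ Fin S.ncard := Fintype.equivFinOfCardEq hcard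
    have hQcoef : ∀ q q' : ↥S,
        coeff (mFor q'.1)
          (X 0 ^ (q : ℕ × ℕ).1 * X 1 ^ (q : ℕ × ℕ).2 + R q) =
        if q = q' then 1 else 0 := by
      intro q q'
      have hR0 : coeff (mFor q'.1) (R q) = 0 := by
        by_contra h0
        have hlt := hRdeg q _ (MvPolynomial.mem_support_iff.mpr h0)
        rw [mFor_zero, mFor_one] at hlt
        have hk := q'.2.2
        omega
      rw [MvPolynomial.coeff_add, hR0, add_zero, monEq, MvPolynomial.coeff_monomial]
      by_cases hqq : q = q'
      · rw [if_pos (by rw [hqq]), if_pos hqq]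
      · rw [if_neg, if_neg hqq]
        intro hh
        exact hqq (Subtype.ext (mFor_inj hh))
    refine ⟨fun i => X 0 ^ ((e.symm i : ℕ × ℕ)).1 * X 1 ^ ((e.symm i : ℕ × ℕ)).2 + R (e.symm i),
      ?_, ?_⟩
    · rw [Fintype.linearIndependent_iff]
      intro g hg i
      have h0 := congrArg (MvPolynomial.coeff (mFor ((e.symm i : ↥S) : ℕ × ℕ))) hg
      rw [MvPolynomial.coeff_zero, MvPolynomial.coeff_sum] at h0
      simp only [MvPolynomial.coeff_smul, smul_eq_mul, hQcoef, Equiv.apply_eq_iff_eq,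
        mul_ite, mul_one, mul_zero, Finset.sum_ite_eq', Finset.mem_univ, if_true] at h0
      exact h0
    · intro i
      refine ⟨hRsup (e.symm i), ?_, hRsol (e.symm i)⟩
      have h1 : (X 0 ^ ((e.symm i : ℕ × ℕ)).1 * X 1 ^ ((e.symm i : ℕ × ℕ)).2 :
          MvPolynomial (Fin 2) ℝ).totalDegree ≤ k := by
        rw [monEq, totalDegree_monomial _ one_ne_zero, sumEq, mFor_zero, mFor_one]
        have hk := (e.symm i).2.2
        omega
      have h2 : (R (e.symm i)).totalDegree ≤ k :=
        totdeg_le fun m hm => le_of_lt (hRdeg _ m hm)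
      exact le_trans (totalDegree_add _ _) (max_le h1 h2)
end
end

section
/- Let a, b ∈ ℝ with a·p + b ≠ 0 for every p ∈ ℕ, and suppose the coefficients have the form A₁₁(x) = a x₁² + a₁₁ x₁ + b₁₁ x₂ + c₁₁, A₁₂(x) = a x₁x₂ + a₁₂ x₁ + b₁₂ x₂ + c₁₂, A₂₁(x) = a x₁x₂ + a₂₁ x₁ + b₂₁ x₂ + c₂₁, A₂₂(x) = a x₂² + a₂₂ x₁ + b₂₂ x₂ + c₂₂, B₁(x) = b x₁ + d₁, B₂(x) = b x₂ + d₂, where c₁₁ + c₁₂ + c₂₁ + c₂₂ = 0. Then for every n ∈ ℕ and every pair (r,s) ∈ ℕ × ℕ with r + s = n there exists a real polynomial P of total degree n whose homogeneous part of degree n equals x₁^r x₂^s, such that 𝒟P = λ_n P on ℤ × ℤ, where λ_n = n((n−1)a + b). -/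
open MvPolynomial

noncomputable section

/-!
On monomials, `𝒟` acts through the leading terms of the differences:
`Δ₁∇₁ x₁ⁱ = i(i-1) x₁ⁱ⁻² + …`, `Δ₁ x₁ⁱ = i x₁ⁱ⁻¹ + …`, and these only meet the top-degree parts
`a x₁²`, `a x₁x₂`, `a x₂²`, `b x₁`, `b x₂` of the coefficients. Hence `𝒟` does not raise the total
degree, and on a polynomial of degree `≤ N` it acts as multiplication by
`λ_N = N((N-1)a + b)` up to terms of degree `< N`: `𝒟` is triangular for the degree filtration.
Since `λ_n - λ_m = (n - m)(a(n + m - 1) + b) ≠ 0` for `m < n`, the map `𝒟 - λ_n` is injective, hence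
bijective, on the finite-dimensional space of polynomials of degree `< n`. Solving
`(𝒟 - λ_n) R = -(𝒟 - λ_n)(x₁ʳ x₂ˢ)` there gives the eigenpolynomial `x₁ʳ x₂ˢ + R`.
-/

namespace MvPolynomial

variable {σ R : Type*} [CommRing R]

def totalDegreeLT (n : ℕ) : Submodule R (MvPolynomial σ R) :=
  restrictSupport R {m | m.degree < n}

lemma mem_totalDegreeLT {n : ℕ} {p : MvPolynomial σ R} :
    p ∈ totalDegreeLT n ↔ ∀ m ∈ p.support, m.degree < n :=
  .rfl

lemma totalDegreeLT_mono {m n : ℕ} (h : m ≤ n) :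
    (totalDegreeLT m : Submodule R (MvPolynomial σ R)) ≤ totalDegreeLT n :=
  restrictSupport_mono R fun _ hd => lt_of_lt_of_le hd h

instance [Finite σ] (n : ℕ) :
    Module.Finite R (totalDegreeLT n : Submodule R (MvPolynomial σ R)) :=
  have := (Finsupp.finite_of_degree_lt (σ := σ) n).to_subtype
  Module.Finite.of_basis (basisRestrictSupport R _)

lemma monomial_mem_totalDegreeLT {n : ℕ} {m : σ →₀ ℕ} (h : m.degree < n) (c : R) :
    monomial m c ∈ totalDegreeLT n := by
  simp [totalDegreeLT, h]

lemma C_mem_totalDegreeLT (c : R) : (C c : MvPolynomial σ R) ∈ totalDegreeLT 1 :=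
  monomial_mem_totalDegreeLT (by simp) c

lemma C_mul_X_pow_mem_totalDegreeLT (k : σ) (c : R) (i : ℕ) :
    C c * X k ^ i ∈ totalDegreeLT (i + 1) := by
  rw [C_mul_X_pow_eq_monomial]
  exact monomial_mem_totalDegreeLT (by simp) c

lemma mul_mem_totalDegreeLT {i j : ℕ} {p q : MvPolynomial σ R}
    (hp : p ∈ totalDegreeLT i) (hq : q ∈ totalDegreeLT (j + 1)) :
    p * q ∈ totalDegreeLT (i + j) := by
  have hpq := Submodule.mul_mem_mul hp hq
  rw [totalDegreeLT, totalDegreeLT, ← restrictSupport_add] at hpq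
  refine restrictSupport_mono R ?_ hpq
  rintro _ ⟨m, hm, m', hm', rfl⟩
  simp only [Set.mem_ofPred_eq, map_add] at hm hm' ⊢
  omega

lemma mem_totalDegreeLT_of_X_pow_mul {n e : ℕ} {k : σ} {p : MvPolynomial σ R}
    (h : X k ^ e * p ∈ totalDegreeLT (n + e)) : p ∈ totalDegreeLT n := by
  rw [mem_totalDegreeLT] at h ⊢
  intro m hm
  have hdeg := h (Finsupp.single k e + m) (by
    rw [X_pow_eq_monomial, mem_support_iff, coeff_monomial_mul, one_mul]
    exact mem_support_iff.mp hm)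
  simp only [map_add, Finsupp.degree_single] at hdeg
  omega

lemma mem_totalDegreeLT_totalDegree_add_one (p : MvPolynomial σ R) :
    p ∈ totalDegreeLT (p.totalDegree + 1) :=
  mem_totalDegreeLT.2 fun _ hm => Nat.lt_succ_of_le (le_totalDegree hm)

lemma notMem_totalDegreeLT_totalDegree {p : MvPolynomial σ R} (hp : p ≠ 0) :
    p ∉ totalDegreeLT p.totalDegree := by
  obtain ⟨m, hm, hmax⟩ := Finset.exists_mem_eq_sup p.support (support_nonempty.2 hp)
    fun m => m.sum fun _ e => e
  intro h
  exact (mem_totalDegreeLT.1 h m hm).ne hmax.symm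

/-- `p` and `q` have total degree at most `d` and the same homogeneous component of degree `d`. -/
def TopEq (d : ℕ) (p q : MvPolynomial σ R) : Prop :=
  q ∈ totalDegreeLT (d + 1) ∧ p - q ∈ totalDegreeLT d

lemma TopEq.mem {d : ℕ} {p q : MvPolynomial σ R} (h : TopEq d p q) :
    p ∈ totalDegreeLT (d + 1) := by
  simpa using add_mem (totalDegreeLT_mono d.le_succ h.2) h.1

lemma TopEq.add {d : ℕ} {p p' q q' : MvPolynomial σ R} (hp : TopEq d p p')
    (hq : TopEq d q q') : TopEq d (p + q) (p' + q') :=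
  ⟨add_mem hp.1 hq.1, by simpa [add_sub_add_comm] using add_mem hp.2 hq.2⟩

lemma TopEq.mul {d e : ℕ} {p p' q q' : MvPolynomial σ R} (hp : TopEq d p p')
    (hq : TopEq e q q') : TopEq (d + e) (p * q) (p' * q') := by
  refine ⟨by simpa [add_right_comm] using mul_mem_totalDegreeLT hp.1 hq.1, ?_⟩
  rw [show p * q - p' * q' = (p - p') * q + (q - q') * p' by ring]
  exact add_mem (mul_mem_totalDegreeLT hp.2 hq.mem)
    (by simpa [add_comm] using mul_mem_totalDegreeLT hq.2 hp.1)

lemma TopEq.mul₃ {d₁ d₂ d₃ d : ℕ} {p p' q q' r r' : MvPolynomial σ R} (hp : TopEq d₁ p p')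
    (hq : TopEq d₂ q q') (hr : TopEq d₃ r r') (hd : d₁ + d₂ + d₃ = d) :
    TopEq d (p * q * r) (p' * q' * r') :=
  hd ▸ (hp.mul hq).mul hr

lemma topEq_two_of_eq_add {A L : MvPolynomial σ R} {k l : σ} {u v w : R}
    (hA : A = L + C u * X k + C v * X l + C w) (hL : L ∈ totalDegreeLT 3) : TopEq 2 A L := by
  refine ⟨hL, ?_⟩
  rw [hA, show L + C u * X k + C v * X l + C w - L = C u * X k + C v * X l + C w by ring]
  exact add_mem (add_mem (by simpa using C_mul_X_pow_mem_totalDegreeLT k u 1)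
    (by simpa using C_mul_X_pow_mem_totalDegreeLT l v 1))
    (totalDegreeLT_mono one_le_two (C_mem_totalDegreeLT w))

lemma topEq_one_of_eq_add {B L : MvPolynomial σ R} {w : R} (hB : B = L + C w)
    (hL : L ∈ totalDegreeLT 2) : TopEq 1 B L :=
  ⟨hL, by simpa [hB] using C_mem_totalDegreeLT w⟩

lemma cast_choose_two_mul_two (i : ℕ) : (i.choose 2 * 2 : R) = i * (i - 1) := by
  induction i with
  | zero => simp
  | succ i ih =>
    rw [Nat.choose_succ_succ', Nat.choose_one_right]
    push_cast
    linear_combination ih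

/-- Second-order Taylor expansion of `(X k + c) ^ i`, multiplied by `X k ^ 2` so that no
truncated exponent `i - 1` or `i - 2` occurs. -/
lemma X_sq_mul_X_add_C_pow_sub_mem (k : σ) (c : R) (i : ℕ) :
    X k ^ 2 * (X k + C c) ^ i
      - (X k ^ (i + 2) + C (c * i) * X k ^ (i + 1) + C (c ^ 2 * i.choose 2) * X k ^ i)
      ∈ totalDegreeLT i := by
  induction i with
  | zero => simp
  | succ i ih =>
    have hX : X k + C c ∈ (totalDegreeLT 2 : Submodule R (MvPolynomial σ R)) :=
      add_mem (monomial_mem_totalDegreeLT (m := Finsupp.single k 1) (by simp) 1)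
        (totalDegreeLT_mono one_le_two (C_mem_totalDegreeLT c))
    convert add_mem (mul_mem_totalDegreeLT ih hX)
      (C_mul_X_pow_mem_totalDegreeLT k (c ^ 3 * i.choose 2) i) using 1
    rw [Nat.choose_succ_succ', Nat.choose_one_right]
    simp only [map_mul, map_pow, map_add, map_one, map_natCast, Nat.cast_add, Nat.cast_one]
    ring

lemma topEq_X_sq_mul_X_pow (k : σ) (i : ℕ) :
    TopEq (i + 2) (X k ^ 2 * X k ^ i) (C (1 : R) * X k ^ (i + 2)) :=
  ⟨C_mul_X_pow_mem_totalDegreeLT k _ _, by simp [← pow_add, add_comm]⟩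

lemma topEq_X_sq_mul_forwardDiff (k : σ) (i : ℕ) :
    TopEq (i + 1) (X k ^ 2 * ((X k + 1) ^ i - X k ^ i)) (C (i : R) * X k ^ (i + 1)) := by
  refine ⟨C_mul_X_pow_mem_totalDegreeLT k _ _, ?_⟩
  convert add_mem (totalDegreeLT_mono i.le_succ (X_sq_mul_X_add_C_pow_sub_mem k (1 : R) i))
    (C_mul_X_pow_mem_totalDegreeLT k (i.choose 2 : R) i) using 1
  simp only [map_one, one_mul, one_pow]
  ring

lemma topEq_X_sq_mul_backwardDiff (k : σ) (i : ℕ) :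
    TopEq (i + 1) (X k ^ 2 * (X k ^ i - (X k - 1) ^ i)) (C (i : R) * X k ^ (i + 1)) := by
  refine ⟨C_mul_X_pow_mem_totalDegreeLT k _ _, ?_⟩
  convert neg_mem (add_mem
    (totalDegreeLT_mono i.le_succ (X_sq_mul_X_add_C_pow_sub_mem k (-1 : R) i))
    (C_mul_X_pow_mem_totalDegreeLT k (i.choose 2 : R) i)) using 1
  simp only [map_neg, map_one, neg_mul, one_mul, neg_sq, one_pow, map_natCast,
    ← sub_eq_add_neg]
  ring

lemma topEq_X_sq_mul_secondDiff (k : σ) (i : ℕ) :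
    TopEq i (X k ^ 2 * ((X k + 1) ^ i - 2 * X k ^ i + (X k - 1) ^ i))
      (C ((i : R) * (i - 1)) * X k ^ i) := by
  refine ⟨C_mul_X_pow_mem_totalDegreeLT k _ _, ?_⟩
  convert add_mem (X_sq_mul_X_add_C_pow_sub_mem k (1 : R) i)
    (X_sq_mul_X_add_C_pow_sub_mem k (-1 : R) i) using 1
  rw [← cast_choose_two_mul_two]
  simp only [map_neg, map_one, map_mul, map_natCast, map_ofNat, neg_mul, one_mul, neg_sq,
    one_pow, ← sub_eq_add_neg]
  ring

lemma sub_smul_mem_totalDegreeLT_of_monomial (T : MvPolynomial σ R →ₗ[R] MvPolynomial σ R)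
    (μ : ℕ → R)
    (hT : ∀ m, T (monomial m 1) - μ m.degree • monomial m 1 ∈ totalDegreeLT m.degree)
    (N : ℕ) {p : MvPolynomial σ R} (hp : p ∈ totalDegreeLT (N + 1)) :
    T p - μ N • p ∈ totalDegreeLT N := by
  rw [totalDegreeLT, restrictSupport_eq_span] at hp
  induction hp using Submodule.span_induction with
  | mem x hx =>
    obtain ⟨m, hm, rfl⟩ := hx
    rcases (Nat.lt_succ_iff.1 hm).lt_or_eq with hlt | rfl
    · rw [show T (monomial m 1) - μ N • monomial m 1
          = (T (monomial m 1) - μ m.degree • monomial m 1) + (μ m.degree - μ N) • monomial m 1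
          by module]
      exact add_mem (totalDegreeLT_mono hlt.le (hT m))
        (Submodule.smul_mem _ _ (monomial_mem_totalDegreeLT hlt 1))
    · exact hT m
  | zero => simp
  | add x y _ _ hx hy =>
    convert add_mem hx hy using 1
    simp only [map_add, smul_add]
    abel
  | smul c x _ hx =>
    convert Submodule.smul_mem _ c hx using 1
    simp only [map_smul, smul_sub, smul_comm c (μ N)]

theorem exists_add_eigenvector_of_triangular {K : Type*} [Field K] [Finite σ]
    (T : MvPolynomial σ K →ₗ[K] MvPolynomial σ K) (μ : ℕ → K)
    (hT : ∀ N (p : MvPolynomial σ K), p ∈ totalDegreeLT (N + 1) →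
      T p - μ N • p ∈ totalDegreeLT N)
    {n : ℕ} (hμ : ∀ m < n, μ m ≠ μ n) {p : MvPolynomial σ K} (hp : p ∈ totalDegreeLT (n + 1)) :
    ∃ R ∈ totalDegreeLT n, T (p + R) = μ n • (p + R) := by
  set F := T - μ n • LinearMap.id
  have hF (q : MvPolynomial σ K) :
      F q = (T q - μ q.totalDegree • q) + (μ q.totalDegree - μ n) • q := by
    simp only [F, LinearMap.sub_apply, LinearMap.smul_apply, LinearMap.id_apply]
    module
  have hdeg {q : MvPolynomial σ K} (hq : q ∈ totalDegreeLT n) (h0 : q ≠ 0) :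
      q.totalDegree < n :=
    lt_of_not_ge fun h => notMem_totalDegreeLT_totalDegree h0 (totalDegreeLT_mono h hq)
  have hmaps : ∀ q : MvPolynomial σ K, q ∈ totalDegreeLT n → F q ∈ totalDegreeLT n := by
    intro q hq
    rcases eq_or_ne q 0 with rfl | h0
    · simp
    rw [hF]
    exact add_mem (totalDegreeLT_mono (hdeg hq h0).le
      (hT _ q (mem_totalDegreeLT_totalDegree_add_one q))) (Submodule.smul_mem _ _ hq)
  have hker {q : MvPolynomial σ K} (hq : q ∈ totalDegreeLT n) (hFq : F q = 0) : q = 0 := by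
    by_contra h0
    have hlow : (μ q.totalDegree - μ n) • q ∈ totalDegreeLT q.totalDegree := by
      rw [← add_sub_cancel_left (T q - μ q.totalDegree • q) ((μ q.totalDegree - μ n) • q),
        ← hF, hFq, zero_sub]
      exact neg_mem (hT _ q (mem_totalDegreeLT_totalDegree_add_one q))
    rw [Submodule.smul_mem_iff _ (sub_ne_zero.2 (hμ _ (hdeg hq h0)))] at hlow
    exact notMem_totalDegreeLT_totalDegree h0 hlow
  have hinj : Set.InjOn F (totalDegreeLT n : Submodule K (MvPolynomial σ K)) :=
    fun x hx y hy hxy => sub_eq_zero.1 (hker (sub_mem hx hy) (by rw [map_sub, hxy, sub_self]))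
  obtain ⟨R, hR, hFR⟩ := (LinearMap.injOn_iff_surjOn hmaps).1 hinj
    (neg_mem (hT n p hp) : -F p ∈ totalDegreeLT n)
  refine ⟨R, hR, sub_eq_zero.1 ?_⟩
  have hFpR : F (p + R) = 0 := by rw [map_add, hFR, add_neg_cancel]
  simpa [F] using hFpR

end MvPolynomial

def shift (v : Fin 2 → ℤ) : MvPolynomial (Fin 2) ℝ →ₐ[ℝ] MvPolynomial (Fin 2) ℝ :=
  aeval fun i => X i + C (v i : ℝ)

lemma pev_shift (v : Fin 2 → ℤ) (p : MvPolynomial (Fin 2) ℝ) (x : ℤ × ℤ) :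
    pev (shift v p) x = pev p (x.1 + v 0, x.2 + v 1) := by
  simp only [pev, shift, ← aeval_eq_eval, aeval_eq_bind₁, aeval_bind₁]
  refine congrArg (aeval (R := ℝ) · p) (funext fun i => ?_)
  fin_cases i <;> simp

lemma pev_add (p q : MvPolynomial (Fin 2) ℝ) (x : ℤ × ℤ) :
    pev (p + q) x = pev p x + pev q x :=
  map_add (eval _) p q

lemma pev_sub (p q : MvPolynomial (Fin 2) ℝ) (x : ℤ × ℤ) :
    pev (p - q) x = pev p x - pev q x :=
  map_sub (eval _) p q

lemma pev_mul (p q : MvPolynomial (Fin 2) ℝ) (x : ℤ × ℤ) :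
    pev (p * q) x = pev p x * pev q x :=
  map_mul (eval _) p q

def forwardDiff (k : Fin 2) : MvPolynomial (Fin 2) ℝ →ₗ[ℝ] MvPolynomial (Fin 2) ℝ :=
  (shift (Pi.single k 1)).toLinearMap - LinearMap.id

def backwardDiff (k : Fin 2) : MvPolynomial (Fin 2) ℝ →ₗ[ℝ] MvPolynomial (Fin 2) ℝ :=
  LinearMap.id - (shift (Pi.single k (-1))).toLinearMap

lemma pev_forwardDiff_zero (p : MvPolynomial (Fin 2) ℝ) :
    pev (forwardDiff 0 p) = fd1 (pev p) := by
  funext x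
  simp [forwardDiff, fd1, pev_sub, pev_shift]

lemma pev_forwardDiff_one (p : MvPolynomial (Fin 2) ℝ) :
    pev (forwardDiff 1 p) = fd2 (pev p) := by
  funext x
  simp [forwardDiff, fd2, pev_sub, pev_shift]

lemma pev_backwardDiff_zero (p : MvPolynomial (Fin 2) ℝ) :
    pev (backwardDiff 0 p) = bd1 (pev p) := by
  funext x
  simp [backwardDiff, bd1, pev_shift, pev_sub, Int.sub_eq_add_neg]

lemma pev_backwardDiff_one (p : MvPolynomial (Fin 2) ℝ) :
    pev (backwardDiff 1 p) = bd2 (pev p) := by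
  funext x
  simp [backwardDiff, bd2, pev_shift, pev_sub, Int.sub_eq_add_neg]

def diffOp (A11 A12 A21 A22 B1 B2 : MvPolynomial (Fin 2) ℝ) :
    MvPolynomial (Fin 2) ℝ →ₗ[ℝ] MvPolynomial (Fin 2) ℝ :=
  LinearMap.mulLeft ℝ A11 ∘ₗ forwardDiff 0 ∘ₗ backwardDiff 0
    + LinearMap.mulLeft ℝ A12 ∘ₗ forwardDiff 0 ∘ₗ backwardDiff 1
    + LinearMap.mulLeft ℝ A21 ∘ₗ forwardDiff 1 ∘ₗ backwardDiff 0
    + LinearMap.mulLeft ℝ A22 ∘ₗ forwardDiff 1 ∘ₗ backwardDiff 1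
    + LinearMap.mulLeft ℝ B1 ∘ₗ forwardDiff 0 + LinearMap.mulLeft ℝ B2 ∘ₗ forwardDiff 1

lemma pev_diffOp (A11 A12 A21 A22 B1 B2 p : MvPolynomial (Fin 2) ℝ) :
    pev (diffOp A11 A12 A21 A22 B1 B2 p) = Dop A11 A12 A21 A22 B1 B2 (pev p) := by
  funext x
  simp only [diffOp, LinearMap.add_apply, LinearMap.comp_apply, LinearMap.mulLeft_apply, Dop,
    pev_add, pev_mul, pev_forwardDiff_zero, pev_forwardDiff_one, pev_backwardDiff_zero,
    pev_backwardDiff_one]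

lemma diffOp_X_pow_mul_X_pow (A11 A12 A21 A22 B1 B2 : MvPolynomial (Fin 2) ℝ) (i j : ℕ) :
    diffOp A11 A12 A21 A22 B1 B2 (X 0 ^ i * X 1 ^ j) =
      A11 * (((X 0 + 1) ^ i - 2 * X 0 ^ i + (X 0 - 1) ^ i) * X 1 ^ j)
      + A12 * (((X 0 + 1) ^ i - X 0 ^ i) * (X 1 ^ j - (X 1 - 1) ^ j))
      + A21 * ((X 0 ^ i - (X 0 - 1) ^ i) * ((X 1 + 1) ^ j - X 1 ^ j))
      + A22 * (X 0 ^ i * ((X 1 + 1) ^ j - 2 * X 1 ^ j + (X 1 - 1) ^ j))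
      + B1 * (((X 0 + 1) ^ i - X 0 ^ i) * X 1 ^ j)
      + B2 * (X 0 ^ i * ((X 1 + 1) ^ j - X 1 ^ j)) := by
  simp only [diffOp, forwardDiff, backwardDiff, shift, LinearMap.add_apply, LinearMap.sub_apply,
    LinearMap.comp_apply, LinearMap.id_apply, LinearMap.mulLeft_apply, AlgHom.toLinearMap_apply,
    map_sub, map_mul, map_pow, map_add, aeval_X, Pi.single_eq_same, Pi.single_eq_of_ne,
    ne_eq, one_ne_zero, zero_ne_one, not_false_eq_true, Int.cast_one, Int.cast_neg, Int.cast_zero,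
    map_one, map_neg, map_zero]
  ring

def diffOpEigenvalue (a b : ℝ) (n : ℕ) : ℝ := n * ((n - 1) * a + b)

lemma diffOpEigenvalue_ne {a b : ℝ} (hab : ∀ p : ℕ, a * p + b ≠ 0) {m n : ℕ} (h : m < n) :
    diffOpEigenvalue a b m ≠ diffOpEigenvalue a b n := by
  have hdiff : diffOpEigenvalue a b n - diffOpEigenvalue a b m
      = (n - m) * (a * ((n + m - 1 : ℕ) : ℝ) + b) := by
    rw [Nat.cast_sub (by omega), diffOpEigenvalue, diffOpEigenvalue]
    push_cast
    ring
  intro heq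
  refine mul_ne_zero (sub_ne_zero.2 (Nat.cast_lt.2 h).ne') (hab (n + m - 1)) ?_
  rw [← hdiff, heq, sub_self]

lemma diffOp_X_pow_mul_X_pow_sub_mem {A11 A12 A21 A22 B1 B2 : MvPolynomial (Fin 2) ℝ} {a b : ℝ}
    (hA11 : TopEq 2 A11 (C a * X 0 ^ 2)) (hA12 : TopEq 2 A12 (C a * (X 0 * X 1)))
    (hA21 : TopEq 2 A21 (C a * (X 0 * X 1))) (hA22 : TopEq 2 A22 (C a * X 1 ^ 2))
    (hB1 : TopEq 1 B1 (C b * X 0)) (hB2 : TopEq 1 B2 (C b * X 1)) (i j : ℕ) :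
    diffOp A11 A12 A21 A22 B1 B2 (X 0 ^ i * X 1 ^ j)
      - diffOpEigenvalue a b (i + j) • (X 0 ^ i * X 1 ^ j) ∈ totalDegreeLT (i + j) := by
  have h₁₁ := hA11.mul₃ (topEq_X_sq_mul_secondDiff 0 i) (topEq_X_sq_mul_X_pow 1 j)
    (d := i + j + 2 + 2) (by ring)
  have h₁₂ := hA12.mul₃ (topEq_X_sq_mul_forwardDiff 0 i) (topEq_X_sq_mul_backwardDiff 1 j)
    (d := i + j + 2 + 2) (by ring)
  have h₂₁ := hA21.mul₃ (topEq_X_sq_mul_backwardDiff 0 i) (topEq_X_sq_mul_forwardDiff 1 j)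
    (d := i + j + 2 + 2) (by ring)
  have h₂₂ := hA22.mul₃ (topEq_X_sq_mul_X_pow 0 i) (topEq_X_sq_mul_secondDiff 1 j)
    (d := i + j + 2 + 2) (by ring)
  have h₁ := hB1.mul₃ (topEq_X_sq_mul_forwardDiff 0 i) (topEq_X_sq_mul_X_pow 1 j)
    (d := i + j + 2 + 2) (by ring)
  have h₂ := hB2.mul₃ (topEq_X_sq_mul_X_pow 0 i) (topEq_X_sq_mul_forwardDiff 1 j)
    (d := i + j + 2 + 2) (by ring)
  refine mem_totalDegreeLT_of_X_pow_mul (k := 1) (e := 2)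
    (mem_totalDegreeLT_of_X_pow_mul (k := 0) (e := 2) ?_)
  convert (((((h₁₁.add h₁₂).add h₂₁).add h₂₂).add h₁).add h₂).2 using 1
  rw [diffOp_X_pow_mul_X_pow, diffOpEigenvalue, smul_eq_C_mul]
  simp only [map_mul, map_add, map_sub, map_natCast, map_one]
  push_cast
  ring

lemma diffOp_monomial_sub_mem {A11 A12 A21 A22 B1 B2 : MvPolynomial (Fin 2) ℝ} {a b : ℝ}
    (hA11 : TopEq 2 A11 (C a * X 0 ^ 2)) (hA12 : TopEq 2 A12 (C a * (X 0 * X 1)))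
    (hA21 : TopEq 2 A21 (C a * (X 0 * X 1))) (hA22 : TopEq 2 A22 (C a * X 1 ^ 2))
    (hB1 : TopEq 1 B1 (C b * X 0)) (hB2 : TopEq 1 B2 (C b * X 1)) (m : Fin 2 →₀ ℕ) :
    diffOp A11 A12 A21 A22 B1 B2 (monomial m 1)
      - diffOpEigenvalue a b m.degree • monomial m 1 ∈ totalDegreeLT m.degree := by
  rw [monomial_eq, C_1, one_mul, Finsupp.prod_fintype _ _ (by simp), Fin.prod_univ_two,
    Finsupp.degree_eq_sum, Fin.sum_univ_two]
  exact diffOp_X_pow_mul_X_pow_sub_mem hA11 hA12 hA21 hA22 hB1 hB2 _ _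

theorem stmt3_general (A11 A12 A21 A22 B1 B2 : MvPolynomial (Fin 2) ℝ)
    (a b a11 b11 c11 a12 b12 c12 a21 b21 c21 a22 b22 c22 d1 d2 : ℝ)
    (hA11 : A11 = C a * X 0 ^ 2 + C a11 * X 0 + C b11 * X 1 + C c11)
    (hA12 : A12 = C a * (X 0 * X 1) + C a12 * X 0 + C b12 * X 1 + C c12)
    (hA21 : A21 = C a * (X 0 * X 1) + C a21 * X 0 + C b21 * X 1 + C c21)
    (hA22 : A22 = C a * X 1 ^ 2 + C a22 * X 0 + C b22 * X 1 + C c22)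
    (hB1 : B1 = C b * X 0 + C d1)
    (hB2 : B2 = C b * X 1 + C d2)
    (hab : ∀ p : ℕ, a * (p : ℝ) + b ≠ 0) :
    ∀ n : ℕ, ∀ r s : ℕ, r + s = n →
      ∃ R : MvPolynomial (Fin 2) ℝ,
        (∀ m ∈ R.support, m 0 + m 1 < n) ∧
        Dop A11 A12 A21 A22 B1 B2 (pev (X 0 ^ r * X 1 ^ s + R)) =
          (fun x => ((n : ℝ) * (((n : ℝ) - 1) * a + b)) *
            pev (X 0 ^ r * X 1 ^ s + R) x) := by
  rintro _ r s rfl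
  have hX (k : Fin 2) (c : ℝ) : C c * X k ∈ totalDegreeLT 2 := by
    simpa using C_mul_X_pow_mem_totalDegreeLT k c 1
  have hXY (c : ℝ) : C c * (X 0 * X 1 : MvPolynomial (Fin 2) ℝ) ∈ totalDegreeLT 3 := by
    simpa [mul_assoc] using mul_mem_totalDegreeLT (j := 1) (hX 0 c) (hX 1 1)
  have hT := sub_smul_mem_totalDegreeLT_of_monomial (diffOp A11 A12 A21 A22 B1 B2)
    (diffOpEigenvalue a b) (diffOp_monomial_sub_mem
      (topEq_two_of_eq_add hA11 (C_mul_X_pow_mem_totalDegreeLT 0 a 2))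
      (topEq_two_of_eq_add hA12 (hXY a)) (topEq_two_of_eq_add hA21 (hXY a))
      (topEq_two_of_eq_add hA22 (C_mul_X_pow_mem_totalDegreeLT 1 a 2))
      (topEq_one_of_eq_add hB1 (hX 0 b)) (topEq_one_of_eq_add hB2 (hX 1 b)))
  have hp : (X 0 ^ r * X 1 ^ s : MvPolynomial (Fin 2) ℝ) ∈ totalDegreeLT (r + s + 1) := by
    rw [add_right_comm]
    simpa using mul_mem_totalDegreeLT (C_mul_X_pow_mem_totalDegreeLT 0 (1 : ℝ) r)
      (C_mul_X_pow_mem_totalDegreeLT 1 (1 : ℝ) s)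
  obtain ⟨R, hR, hRe⟩ := exists_add_eigenvector_of_triangular _ _ hT
    (fun _ hm => diffOpEigenvalue_ne hab hm) hp
  refine ⟨R, fun m hm => ?_, ?_⟩
  · simpa [Finsupp.degree_eq_sum] using mem_totalDegreeLT.1 hR m hm
  · funext x
    rw [← pev_diffOp, hRe, smul_eq_C_mul, pev_mul]
    simp [pev, diffOpEigenvalue]

/-- sufficiency — for coefficients of the admissible form with
`c₁₁+c₁₂+c₂₁+c₂₂ = 0` and `a·p + b ≠ 0` for all `p ∈ ℕ`, the equation
`𝒟u = λ_n u`, `λ_n = n((n−1)a+b)`, has a monic solution `x₁^r x₂^s + (lower degree)`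
for every `(r,s)` with `r+s = n`. -/
theorem stmt3 (A11 A12 A21 A22 B1 B2 : MvPolynomial (Fin 2) ℝ)
    (a b a11 b11 c11 a12 b12 c12 a21 b21 c21 a22 b22 c22 d1 d2 : ℝ)
    (hA11 : A11 = C a * X 0 ^ 2 + C a11 * X 0 + C b11 * X 1 + C c11)
    (hA12 : A12 = C a * (X 0 * X 1) + C a12 * X 0 + C b12 * X 1 + C c12)
    (hA21 : A21 = C a * (X 0 * X 1) + C a21 * X 0 + C b21 * X 1 + C c21)
    (hA22 : A22 = C a * X 1 ^ 2 + C a22 * X 0 + C b22 * X 1 + C c22)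
    (hB1 : B1 = C b * X 0 + C d1)
    (hB2 : B2 = C b * X 1 + C d2)
    (hab : ∀ p : ℕ, a * (p : ℝ) + b ≠ 0)
    (hc : c11 + c12 + c21 + c22 = 0) :
    ∀ n : ℕ, ∀ r s : ℕ, r + s = n →
      ∃ R : MvPolynomial (Fin 2) ℝ,
        (∀ m ∈ R.support, m 0 + m 1 < n) ∧
        Dop A11 A12 A21 A22 B1 B2 (pev (X 0 ^ r * X 1 ^ s + R)) =
          (fun x => ((n : ℝ) * (((n : ℝ) - 1) * a + b)) *
            pev (X 0 ^ r * X 1 ^ s + R) x) :=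
  stmt3_general A11 A12 A21 A22 B1 B2 a b a11 b11 c11 a12 b12 c12 a21 b21 c21 a22 b22 c22 d1 d2 hA11
    hA12 hA21 hA22 hB1 hB2 hab
end
end

section
/- Let W : ℤ × ℤ → ℝ. There exist functions σ₁, σ₂, σ₃, σ₄ : ℤ × ℤ → ℝ such that for every u : ℤ × ℤ → ℝ one has W·(𝒟u) = ∇₁(σ₁·Δ₁u + σ₂·Δ₂u) + ∇₂(σ₃·Δ₁u + σ₄·Δ₂u) pointwise, if and only if W·B₁ = Δ₁(W·A₁₁) + Δ₂(W·A₁₂) and W·B₂ = Δ₁(W·A₂₁) + Δ₂(W·A₂₂) pointwise on ℤ × ℤ. -/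
open MvPolynomial

noncomputable section

/-- A delta (indicator) function on the lattice, used as test function. -/
def dl (p : ℤ × ℤ) : ℤ × ℤ → ℝ := fun y => if y = p then 1 else 0

lemma z1 (a : ℤ) : a - 1 = a ↔ False := by rw [iff_false]; omega
lemma z2 (a : ℤ) : a - 1 = a + 1 ↔ False := by rw [iff_false]; omega
lemma z3 (a : ℤ) : a + 1 = a ↔ False := by rw [iff_false]; omega
lemma z4 (a : ℤ) : a = a + 1 ↔ False := by rw [iff_false]; omega
lemma z5 (a : ℤ) : a + 1 + 1 = a ↔ False := by rw [iff_false]; omega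
lemma z6 (a : ℤ) : a + 1 + 1 = a + 1 ↔ False := by rw [iff_false]; omega

/-- `W·𝒟` can be put into the self-adjoint form
`∇₁(σ₁Δ₁u + σ₂Δ₂u) + ∇₂(σ₃Δ₁u + σ₄Δ₂u)` if and only if
`W B₁ = Δ₁(W A₁₁) + Δ₂(W A₁₂)` and `W B₂ = Δ₁(W A₂₁) + Δ₂(W A₂₂)`. -/
theorem stmt5 (A11 A12 A21 A22 B1 B2 : MvPolynomial (Fin 2) ℝ) (W : ℤ × ℤ → ℝ) :
    (∃ σ1 σ2 σ3 σ4 : ℤ × ℤ → ℝ, ∀ u : ℤ × ℤ → ℝ, ∀ x : ℤ × ℤ,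
      W x * Dop A11 A12 A21 A22 B1 B2 u x =
        bd1 (fun y => σ1 y * fd1 u y + σ2 y * fd2 u y) x +
          bd2 (fun y => σ3 y * fd1 u y + σ4 y * fd2 u y) x) ↔
    ((∀ x : ℤ × ℤ, W x * pev B1 x =
        fd1 (fun y => W y * pev A11 y) x + fd2 (fun y => W y * pev A12 y) x) ∧
     (∀ x : ℤ × ℤ, W x * pev B2 x =
        fd1 (fun y => W y * pev A21 y) x + fd2 (fun y => W y * pev A22 y) x)) := by
  constructor
  · rintro ⟨σ1, σ2, σ3, σ4, h⟩
    constructor <;> rintro ⟨a, b⟩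
    · have E1 := h (dl (a+1, b)) (a, b)
      have E2 := h (dl (a, b)) (a+1, b)
      have E4 := h (dl (a, b+1)) (a+1, b)
      have E5 := h (dl (a+1, b)) (a, b+1)
      simp only [Dop, fd1, fd2, bd1, bd2, dl, sub_add_cancel, add_sub_cancel_right,
        Prod.mk.injEq, z1, z2, z3, z4, z5, z6, if_true, eq_self_iff_true, true_and, and_true,
        false_and, and_false, if_false, sub_zero, zero_sub, sub_self, mul_zero, mul_one,
        mul_neg, zero_add, add_zero] at E1 E2 E4 E5 ⊢
      linear_combination E1 - E2 - E4 + E5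
    · have E1 := h (dl (a, b+1)) (a, b)
      have E3 := h (dl (a, b)) (a, b+1)
      have E4 := h (dl (a, b+1)) (a+1, b)
      have E5 := h (dl (a+1, b)) (a, b+1)
      simp only [Dop, fd1, fd2, bd1, bd2, dl, sub_add_cancel, add_sub_cancel_right,
        Prod.mk.injEq, z1, z2, z3, z4, z5, z6, if_true, eq_self_iff_true, true_and, and_true,
        false_and, and_false, if_false, sub_zero, zero_sub, sub_self, mul_zero, mul_one,
        mul_neg, zero_add, add_zero] at E1 E3 E4 E5 ⊢
      linear_combination E1 + E4 - E3 - E5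
  · rintro ⟨h1, h2⟩
    refine ⟨fun y => W (y.1+1, y.2) * pev A11 (y.1+1, y.2),
           fun y => W (y.1+1, y.2) * pev A21 (y.1+1, y.2),
           fun y => W (y.1, y.2+1) * pev A12 (y.1, y.2+1),
           fun y => W (y.1, y.2+1) * pev A22 (y.1, y.2+1), ?_⟩
    rintro u ⟨a, b⟩
    have H1 := h1 (a, b)
    have H2 := h2 (a, b)
    simp only [fd1, fd2, Dop, bd1, bd2, sub_add_cancel, add_sub_cancel_right] at H1 H2 ⊢
    linear_combination (u (a+1,b) - u (a,b)) * H1 + (u (a,b+1) - u (a,b)) * H2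
end
end

section
/- Let W : ℤ × ℤ → ℝ. There exist functions σ₁, σ₂, σ₃, σ₄ : ℤ × ℤ → ℝ such that for every u : ℤ × ℤ → ℝ one has W·(𝒟u) = Δ₁(σ₁·∇₁u + σ₂·∇₂u) + Δ₂(σ₃·∇₁u + σ₄·∇₂u) pointwise, if and only if W·B₁ = ∇₁(W·(A₁₁ + B₁)) + ∇₂(W·A₂₁) and W·B₂ = ∇₁(W·A₁₂) + ∇₂(W·(A₂₂ + B₂)) pointwise on ℤ × ℤ. -/
open MvPolynomial

noncomputable section

/-- `W·𝒟` can be put into the self-adjoint form of the second sense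
`Δ₁(σ₁∇₁u + σ₂∇₂u) + Δ₂(σ₃∇₁u + σ₄∇₂u)` if and only if
`W B₁ = ∇₁(W·(A₁₁+B₁)) + ∇₂(W·A₂₁)` and `W B₂ = ∇₁(W·A₁₂) + ∇₂(W·(A₂₂+B₂))`. -/
theorem stmt6 (A11 A12 A21 A22 B1 B2 : MvPolynomial (Fin 2) ℝ) (W : ℤ × ℤ → ℝ) :
    (∃ σ1 σ2 σ3 σ4 : ℤ × ℤ → ℝ, ∀ u : ℤ × ℤ → ℝ, ∀ x : ℤ × ℤ,
      W x * Dop A11 A12 A21 A22 B1 B2 u x =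
        fd1 (fun y => σ1 y * bd1 u y + σ2 y * bd2 u y) x +
          fd2 (fun y => σ3 y * bd1 u y + σ4 y * bd2 u y) x) ↔
    ((∀ x : ℤ × ℤ, W x * pev B1 x =
        bd1 (fun y => W y * (pev A11 y + pev B1 y)) x +
          bd2 (fun y => W y * pev A21 y) x) ∧
     (∀ x : ℤ × ℤ, W x * pev B2 x =
        bd1 (fun y => W y * pev A12 y) x +
          bd2 (fun y => W y * (pev A22 y + pev B2 y)) x)) := by
  constructor
  · rintro ⟨σ1, σ2, σ3, σ4, h⟩
    have e1 : ∀ a : ℤ, ¬(a + 1 = a) := fun a => by omega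
    have e2 : ∀ a : ℤ, ¬(a = a + 1) := fun a => by omega
    have e3 : ∀ a : ℤ, ¬(a - 1 = a) := fun a => by omega
    have e4 : ∀ a : ℤ, ¬(a = a - 1) := fun a => by omega
    have e5 : ∀ a : ℤ, ¬(a + 1 = a - 1) := fun a => by omega
    have e6 : ∀ a : ℤ, ¬(a - 1 = a + 1) := fun a => by omega
    have L2 : ∀ a b : ℤ, σ2 (a + 1, b) = W (a, b) * pev A12 (a, b) := by
      intro a b
      have H := h (fun z => if z = (a + 1, b - 1) then (1 : ℝ) else 0) (a, b)
      simp only [Dop, fd1, fd2, bd1, bd2, Prod.mk.injEq, add_sub_cancel_right, sub_add_cancel,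
        e1, e2, e3, e4, e5, e6] at H
      simp at H
      linarith
    have L1 : ∀ a b : ℤ, σ1 (a + 1, b) = W (a, b) * (pev A11 (a, b) + pev B1 (a, b)) := by
      intro a b
      have H := h (fun z => if z = (a + 1, b) then (1 : ℝ) else 0) (a, b)
      simp only [Dop, fd1, fd2, bd1, bd2, Prod.mk.injEq, add_sub_cancel_right, sub_add_cancel,
        e1, e2, e3, e4, e5, e6] at H
      simp at H
      have := L2 a b
      linarith
    have L3 : ∀ a b : ℤ, σ3 (a, b + 1) = W (a, b) * pev A21 (a, b) := by
      intro a b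
      have H := h (fun z => if z = (a - 1, b + 1) then (1 : ℝ) else 0) (a, b)
      simp only [Dop, fd1, fd2, bd1, bd2, Prod.mk.injEq, add_sub_cancel_right, sub_add_cancel,
        e1, e2, e3, e4, e5, e6] at H
      simp at H
      linarith
    have L4 : ∀ a b : ℤ, σ4 (a, b + 1) = W (a, b) * (pev A22 (a, b) + pev B2 (a, b)) := by
      intro a b
      have H := h (fun z => if z = (a, b + 1) then (1 : ℝ) else 0) (a, b)
      simp only [Dop, fd1, fd2, bd1, bd2, Prod.mk.injEq, add_sub_cancel_right, sub_add_cancel,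
        e1, e2, e3, e4, e5, e6] at H
      simp at H
      have := L3 a b
      linarith
    have L13 : ∀ a b : ℤ, σ1 (a, b) + σ3 (a, b) = W (a, b) * (pev A11 (a, b) + pev A21 (a, b)) := by
      intro a b
      have H := h (fun z => if z = (a - 1, b) then (1 : ℝ) else 0) (a, b)
      simp only [Dop, fd1, fd2, bd1, bd2, Prod.mk.injEq, add_sub_cancel_right, sub_add_cancel,
        e1, e2, e3, e4, e5, e6] at H
      simp at H
      linarith
    have L24 : ∀ a b : ℤ, σ2 (a, b) + σ4 (a, b) = W (a, b) * (pev A12 (a, b) + pev A22 (a, b)) := by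
      intro a b
      have H := h (fun z => if z = (a, b - 1) then (1 : ℝ) else 0) (a, b)
      simp only [Dop, fd1, fd2, bd1, bd2, Prod.mk.injEq, add_sub_cancel_right, sub_add_cancel,
        e1, e2, e3, e4, e5, e6] at H
      simp at H
      linarith
    constructor
    · intro x
      have hA := L13 x.1 x.2
      have hB := L1 (x.1 - 1) x.2
      have hC := L3 x.1 (x.2 - 1)
      rw [sub_add_cancel] at hB hC
      simp only [bd1, bd2, Prod.mk.eta]
      linear_combination hA - hB - hC
    · intro x
      have hA := L24 x.1 x.2
      have hB := L2 (x.1 - 1) x.2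
      have hC := L4 x.1 (x.2 - 1)
      rw [sub_add_cancel] at hB hC
      simp only [bd1, bd2, Prod.mk.eta]
      linear_combination hA - hB - hC
  · rintro ⟨h1, h2⟩
    refine ⟨fun y => W (y.1 - 1, y.2) * (pev A11 (y.1 - 1, y.2) + pev B1 (y.1 - 1, y.2)),
            fun y => W (y.1 - 1, y.2) * pev A12 (y.1 - 1, y.2),
            fun y => W (y.1, y.2 - 1) * pev A21 (y.1, y.2 - 1),
            fun y => W (y.1, y.2 - 1) * (pev A22 (y.1, y.2 - 1) + pev B2 (y.1, y.2 - 1)),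
            fun u x => ?_⟩
    have h1x := h1 x
    have h2x := h2 x
    simp only [bd1, bd2] at h1x h2x
    simp only [Dop, fd1, fd2, bd1, bd2, add_sub_cancel_right, Prod.mk.eta]
    linear_combination (u x - u (x.1 - 1, x.2)) * h1x + (u x - u (x.1, x.2 - 1)) * h2x
end
end

section
/- Let W : ℤ × ℤ → ℝ be finitely supported and suppose W·B₁ = Δ₁(W·A₁₁) + Δ₂(W·A₁₂) and W·B₂ = Δ₁(W·A₂₁) + Δ₂(W·A₂₂) hold pointwise on ℤ × ℤ. Then for every real polynomial g in two variables, ∑_{x ∈ ℤ×ℤ} W(x)·[A₁₁(x)(∇₁g)(x) + A₁₂(x)(∇₂g)(x) + B₁(x)g(x)] = 0 and ∑_{x ∈ ℤ×ℤ} W(x)·[A₂₁(x)(∇₁g)(x) + A₂₂(x)(∇₂g)(x) + B₂(x)g(x)] = 0. -/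
open MvPolynomial

noncomputable section

lemma tele (e : (ℤ × ℤ) ≃ (ℤ × ℤ)) (h : ℤ × ℤ → ℝ) (hh : (Function.support h).Finite) :
    ∑ᶠ x : ℤ × ℤ, (h (e x) - h x) = 0 := by
  have h1 : (Function.support fun x => h (e x)).Finite := by
    have : (Function.support fun x => h (e x)) = e ⁻¹' Function.support h := rfl
    rw [this]
    exact hh.preimage (e.injective.injOn)
  rw [finsum_sub_distrib h1 hh, finsum_comp_equiv e, sub_self]

lemma key (W F1 F2 g : ℤ × ℤ → ℝ) (hW : (Function.support W).Finite) :
    ∑ᶠ x : ℤ × ℤ, (W x * (F1 x * bd1 g x + F2 x * bd2 g x)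
      + (fd1 (fun y => W y * F1 y) x + fd2 (fun y => W y * F2 y) x) * g x) = 0 := by
  set e1 : (ℤ × ℤ) ≃ (ℤ × ℤ) := (Equiv.addRight (1:ℤ)).prodCongr (Equiv.refl ℤ) with he1
  set e2 : (ℤ × ℤ) ≃ (ℤ × ℤ) := (Equiv.refl ℤ).prodCongr (Equiv.addRight (1:ℤ)) with he2
  set h1 : ℤ × ℤ → ℝ := fun x => W x * F1 x * g (x.1 - 1, x.2) with hh1
  set h2 : ℤ × ℤ → ℝ := fun x => W x * F2 x * g (x.1, x.2 - 1) with hh2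
  have hs1 : (Function.support h1).Finite :=
    hW.subset (fun x hx => by simp [hh1] at hx; intro h; simp [h] at hx)
  have hs2 : (Function.support h2).Finite :=
    hW.subset (fun x hx => by simp [hh2] at hx; intro h; simp [h] at hx)
  have congr : ∀ x : ℤ × ℤ, (W x * (F1 x * bd1 g x + F2 x * bd2 g x)
      + (fd1 (fun y => W y * F1 y) x + fd2 (fun y => W y * F2 y) x) * g x)
      = (h1 (e1 x) - h1 x) + (h2 (e2 x) - h2 x) := by
    intro x
    simp only [hh1, hh2, he1, he2, fd1, fd2, bd1, bd2, Equiv.prodCongr_apply, Equiv.coe_refl,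
      Prod.map, Equiv.coe_addRight, id, add_sub_cancel_right]
    ring
  rw [finsum_congr congr]
  have fin1 : (Function.support fun x => h1 (e1 x) - h1 x).Finite := by
    apply Set.Finite.subset ((hs1.preimage (e1.injective.injOn)).union hs1)
    intro x hx
    simp only [Function.mem_support] at hx
    by_contra hc
    simp only [Set.mem_union, Set.mem_preimage, Function.mem_support, not_or, not_not] at hc
    simp [hc.1, hc.2] at hx
  have fin2 : (Function.support fun x => h2 (e2 x) - h2 x).Finite := by
    apply Set.Finite.subset ((hs2.preimage (e2.injective.injOn)).union hs2)
    intro x hx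
    simp only [Function.mem_support] at hx
    by_contra hc
    simp only [Set.mem_union, Set.mem_preimage, Function.mem_support, not_or, not_not] at hc
    simp [hc.1, hc.2] at hx
  rw [finsum_add_distrib fin1 fin2, tele e1 h1 hs1, tele e2 h2 hs2, add_zero]

/-- if `W` is finitely supported and `W·𝒟` is self-adjoint, then the
first order operators `𝒜₁g = A₁₁∇₁g + A₁₂∇₂g + B₁g` and `𝒜₂g = A₂₁∇₁g + A₂₂∇₂g + B₂g`
annihilate the linear functional `ℒf = ∑ W f` on polynomials. -/
theorem stmt9 (A11 A12 A21 A22 B1 B2 : MvPolynomial (Fin 2) ℝ)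
    (W : ℤ × ℤ → ℝ) (hW : (Function.support W).Finite)
    (hsa1 : ∀ x : ℤ × ℤ, W x * pev B1 x =
      fd1 (fun y => W y * pev A11 y) x + fd2 (fun y => W y * pev A12 y) x)
    (hsa2 : ∀ x : ℤ × ℤ, W x * pev B2 x =
      fd1 (fun y => W y * pev A21 y) x + fd2 (fun y => W y * pev A22 y) x) :
    ∀ g : MvPolynomial (Fin 2) ℝ,
      (∑ᶠ x : ℤ × ℤ, W x *
        (pev A11 x * bd1 (pev g) x + pev A12 x * bd2 (pev g) x + pev B1 x * pev g x)
          = 0) ∧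
      (∑ᶠ x : ℤ × ℤ, W x *
        (pev A21 x * bd1 (pev g) x + pev A22 x * bd2 (pev g) x + pev B2 x * pev g x)
          = 0) := by
  intro g
  constructor
  · rw [← key W (pev A11) (pev A12) (pev g) hW]
    apply finsum_congr
    intro x
    rw [show W x * (pev A11 x * bd1 (pev g) x + pev A12 x * bd2 (pev g) x + pev B1 x * pev g x)
        = W x * (pev A11 x * bd1 (pev g) x + pev A12 x * bd2 (pev g) x)
          + (W x * pev B1 x) * pev g x from by ring, hsa1 x]
  · rw [← key W (pev A21) (pev A22) (pev g) hW]
    apply finsum_congr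
    intro x
    rw [show W x * (pev A21 x * bd1 (pev g) x + pev A22 x * bd2 (pev g) x + pev B2 x * pev g x)
        = W x * (pev A21 x * bd1 (pev g) x + pev A22 x * bd2 (pev g) x)
          + (W x * pev B2 x) * pev g x from by ring, hsa2 x]
end
end

section
/- Let W : ℤ × ℤ → ℝ be finitely supported and suppose W is consistent with 𝒟, i.e. for every real polynomial g in two variables: (i) ∑_x W(x)[A₁₁(x)(∇₁g)(x) + A₁₂(x)(∇₂g)(x) + B₁(x)g(x)] = 0, (ii) ∑_x W(x)[A₂₁(x)(∇₁g)(x) + A₂₂(x)(∇₂g)(x) + B₂(x)g(x)] = 0, and (iii) ∑_x W(x)A₁₂(x)g(x−e₂) = ∑_x W(x)A₂₁(x)g(x−e₁). If u and v are real polynomials in two variables satisfying 𝒟u = λu and 𝒟v = μv pointwise on ℤ × ℤ for real numbers λ, μ, then (λ − μ)·∑_{x ∈ ℤ×ℤ} W(x)u(x)v(x) = 0. -/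
/-! The proof is the discrete Lagrange identity
`v 𝒟u - u 𝒟v = L₁(v Δ₁u - u Δ₁v) + L₂(v Δ₂u - u Δ₂v) + A₁₂ h(x - e₂) - A₂₁ h(x - e₁)`,
where `Lᵢ g = Aᵢ₁ ∇₁g + Aᵢ₂ ∇₂g + Bᵢ g` are the first order operators of the consistency
conditions and `h = Δ₂u Δ₁v - Δ₁u Δ₂v`. For polynomial `u`, `v` the functions to which
`L₁`, `L₂` and the shifts are applied are again polynomial, so summing the identity against `W`
makes the right-hand side vanish by (i), (ii) and (iii), while the left-hand side sums to
`(λ - μ) ∑ W u v`. -/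

open MvPolynomial

noncomputable section

def IsPolyFun (f : ℤ × ℤ → ℝ) : Prop := ∃ p : MvPolynomial (Fin 2) ℝ, pev p = f

lemma isPolyFun_pev (p : MvPolynomial (Fin 2) ℝ) : IsPolyFun (pev p) := ⟨p, rfl⟩

namespace IsPolyFun

variable {f g : ℤ × ℤ → ℝ}

lemma sub (hf : IsPolyFun f) (hg : IsPolyFun g) : IsPolyFun (f - g) := by
  obtain ⟨p, rfl⟩ := hf
  obtain ⟨q, rfl⟩ := hg
  exact ⟨p - q, funext fun x => by simp [pev]⟩

lemma mul (hf : IsPolyFun f) (hg : IsPolyFun g) : IsPolyFun (f * g) := by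
  obtain ⟨p, rfl⟩ := hf
  obtain ⟨q, rfl⟩ := hg
  exact ⟨p * q, funext fun x => by simp [pev]⟩

lemma comp_add_const (hf : IsPolyFun f) (c : ℤ × ℤ) : IsPolyFun fun x => f (x + c) := by
  obtain ⟨p, rfl⟩ := hf
  refine ⟨bind₁ ![X 0 + C (c.1 : ℝ), X 1 + C (c.2 : ℝ)] p, funext fun x => ?_⟩
  simp only [pev, eval, eval₂Hom_bind₁]
  congr 2
  funext i
  fin_cases i <;> simp

lemma fd1 (hf : IsPolyFun f) : IsPolyFun (fd1 f) := by
  convert (hf.comp_add_const (1, 0)).sub hf using 1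
  funext ⟨a, b⟩
  simp [_root_.fd1]

lemma fd2 (hf : IsPolyFun f) : IsPolyFun (fd2 f) := by
  convert (hf.comp_add_const (0, 1)).sub hf using 1
  funext ⟨a, b⟩
  simp [_root_.fd2]

end IsPolyFun

def firstOrderOp (a b c : MvPolynomial (Fin 2) ℝ) (g : ℤ × ℤ → ℝ) : ℤ × ℤ → ℝ :=
  fun x => pev a x * bd1 g x + pev b x * bd2 g x + pev c x * g x

def wronskian1 (f g : ℤ × ℤ → ℝ) : ℤ × ℤ → ℝ := g * fd1 f - f * fd1 g

def wronskian2 (f g : ℤ × ℤ → ℝ) : ℤ × ℤ → ℝ := g * fd2 f - f * fd2 g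

def mixedWronskian (f g : ℤ × ℤ → ℝ) : ℤ × ℤ → ℝ := fd2 f * fd1 g - fd1 f * fd2 g

section Wronskians

variable {f g : ℤ × ℤ → ℝ}

lemma IsPolyFun.wronskian1 (hf : IsPolyFun f) (hg : IsPolyFun g) :
    IsPolyFun (wronskian1 f g) :=
  (hg.mul hf.fd1).sub (hf.mul hg.fd1)

lemma IsPolyFun.wronskian2 (hf : IsPolyFun f) (hg : IsPolyFun g) :
    IsPolyFun (wronskian2 f g) :=
  (hg.mul hf.fd2).sub (hf.mul hg.fd2)

lemma IsPolyFun.mixedWronskian (hf : IsPolyFun f) (hg : IsPolyFun g) :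
    IsPolyFun (mixedWronskian f g) :=
  (hf.fd2.mul hg.fd1).sub (hf.fd1.mul hg.fd2)

end Wronskians

lemma Dop_lagrange_identity (A11 A12 A21 A22 B1 B2 : MvPolynomial (Fin 2) ℝ)
    (f g : ℤ × ℤ → ℝ) (x : ℤ × ℤ) :
    g x * Dop A11 A12 A21 A22 B1 B2 f x - f x * Dop A11 A12 A21 A22 B1 B2 g x
      = firstOrderOp A11 A12 B1 (wronskian1 f g) x + firstOrderOp A21 A22 B2 (wronskian2 f g) x
        + (pev A12 x * mixedWronskian f g (x.1, x.2 - 1)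
          - pev A21 x * mixedWronskian f g (x.1 - 1, x.2)) := by
  obtain ⟨a, b⟩ := x
  simp only [Dop, firstOrderOp, wronskian1, wronskian2, mixedWronskian, fd1, fd2, bd1, bd2,
    Pi.mul_apply, Pi.sub_apply, sub_add_cancel, add_sub_cancel_right]
  ring

/-- if the finitely supported weight `W` is consistent with `𝒟`, then
two polynomial eigenfunctions `u`, `v` with eigenvalues `λ`, `μ` satisfy
`(λ − μ)·∑ W u v = 0`. -/
theorem stmt10 (A11 A12 A21 A22 B1 B2 : MvPolynomial (Fin 2) ℝ)
    (W : ℤ × ℤ → ℝ) (hW : (Function.support W).Finite)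
    (hcons1 : ∀ g : MvPolynomial (Fin 2) ℝ,
      ∑ᶠ x : ℤ × ℤ, W x *
        (pev A11 x * bd1 (pev g) x + pev A12 x * bd2 (pev g) x + pev B1 x * pev g x)
          = 0)
    (hcons2 : ∀ g : MvPolynomial (Fin 2) ℝ,
      ∑ᶠ x : ℤ × ℤ, W x *
        (pev A21 x * bd1 (pev g) x + pev A22 x * bd2 (pev g) x + pev B2 x * pev g x)
          = 0)
    (hcons3 : ∀ g : MvPolynomial (Fin 2) ℝ,
      ∑ᶠ x : ℤ × ℤ, W x * pev A12 x * pev g (x.1, x.2 - 1) =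
        ∑ᶠ x : ℤ × ℤ, W x * pev A21 x * pev g (x.1 - 1, x.2))
    (u v : MvPolynomial (Fin 2) ℝ) (lam mu : ℝ)
    (hu : Dop A11 A12 A21 A22 B1 B2 (pev u) = (fun x => lam * pev u x))
    (hv : Dop A11 A12 A21 A22 B1 B2 (pev v) = (fun x => mu * pev v x)) :
    (lam - mu) * ∑ᶠ x : ℤ × ℤ, W x * pev u x * pev v x = 0 := by
  obtain ⟨p1, hp1⟩ := (isPolyFun_pev u).wronskian1 (isPolyFun_pev v)
  obtain ⟨p2, hp2⟩ := (isPolyFun_pev u).wronskian2 (isPolyFun_pev v)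
  obtain ⟨h, hh⟩ := (isPolyFun_pev u).mixedWronskian (isPolyFun_pev v)
  have hfin (F : ℤ × ℤ → ℝ) (hF : ∀ x, W x = 0 → F x = 0) : (Function.support F).Finite :=
    hW.subset fun x hx hWx => hx (hF x hWx)
  calc (lam - mu) * ∑ᶠ x, W x * pev u x * pev v x
      = ∑ᶠ x, W x * (pev v x * Dop A11 A12 A21 A22 B1 B2 (pev u) x
          - pev u x * Dop A11 A12 A21 A22 B1 B2 (pev v) x) := by
        rw [mul_finsum, hu, hv]
        congr 1 with x
        ring
    _ = ∑ᶠ x, W x * firstOrderOp A11 A12 B1 (pev p1) x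
          + ∑ᶠ x, W x * firstOrderOp A21 A22 B2 (pev p2) x
          + (∑ᶠ x, W x * pev A12 x * pev h (x.1, x.2 - 1)
            - ∑ᶠ x, W x * pev A21 x * pev h (x.1 - 1, x.2)) := by
        rw [← finsum_sub_distrib, ← finsum_add_distrib, ← finsum_add_distrib]
        · congr 1 with x
          rw [Dop_lagrange_identity, hp1, hp2, hh]
          ring
        all_goals exact hfin _ fun x hx => by simp [hx]
    _ = 0 := by
      simp only [firstOrderOp, hcons1, hcons2, hcons3, sub_self, add_zero]
end
end

section
/- Let W : ℤ × ℤ → ℝ be finitely supported and suppose: (a) W·B₁ = Δ₁(W·A₁₁) + Δ₂(W·A₁₂) and W·B₂ = Δ₁(W·A₂₁) + Δ₂(W·A₂₂) hold pointwise on ℤ × ℤ, and (b) for every real polynomial g in two variables, ∑_x W(x)A₁₂(x)g(x−e₂) = ∑_x W(x)A₂₁(x)g(x−e₁). If u and v are real polynomials in two variables such that 𝒟u = λu and 𝒟v = μv pointwise on ℤ × ℤ with λ ≠ μ, then ∑_{x ∈ ℤ×ℤ} W(x)u(x)v(x) = 0; that is, polynomial eigenfunctions of 𝒟 with distinct eigenvalues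 are orthogonal with respect to W. -/
open MvPolynomial

noncomputable section

/-!
Multiplying the eigenvalue equations crosswise gives `(λ - μ) W u v = W (𝒟u · v - u · 𝒟v)`.
Condition (a) rewrites the right-hand side as a discrete divergence `Δ₁F₁ + Δ₂F₂` of finitely
supported fluxes plus the mixed term `W A₂₁ Φ(x - e₁) - W A₁₂ Φ(x - e₂)`, where
`Φ = Δ₁u Δ₂v - Δ₂u Δ₁v`. The divergence sums to zero, and since `Φ` is again a polynomial,
condition (b) says exactly that the two mixed sums agree.
-/

open Function

section Telescoping

variable {G M : Type*} [AddGroup G] [AddCommGroup M]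

theorem finite_support_comp_add {f : G → M} (hf : f.support.Finite) (a : G) :
    (support fun x => f (x + a)).Finite :=
  hf.preimage (add_left_injective a).injOn

theorem finite_support_comp_add_sub {f : G → M} (hf : f.support.Finite) (a : G) :
    (support fun x => f (x + a) - f x).Finite :=
  ((finite_support_comp_add hf a).union hf).subset (support_sub _ _)

theorem finsum_comp_add_sub_eq_zero {f : G → M} (hf : f.support.Finite) (a : G) :
    ∑ᶠ x, (f (x + a) - f x) = 0 := by
  rw [finsum_sub_distrib (finite_support_comp_add hf a) hf, sub_eq_zero]
  exact finsum_comp_equiv (Equiv.addRight a)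

end Telescoping

theorem fd1_eq_comp_add_sub (f : ℤ × ℤ → ℝ) : fd1 f = fun x => f (x + (1, 0)) - f x := by
  ext x; simp only [fd1]; congr 2; ext <;> simp

theorem fd2_eq_comp_add_sub (f : ℤ × ℤ → ℝ) : fd2 f = fun x => f (x + (0, 1)) - f x := by
  ext x; simp only [fd2]; congr 2; ext <;> simp

theorem finsum_fd1_eq_zero {f : ℤ × ℤ → ℝ} (hf : f.support.Finite) : ∑ᶠ x, fd1 f x = 0 := by
  rw [fd1_eq_comp_add_sub]; exact finsum_comp_add_sub_eq_zero hf _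

theorem finsum_fd2_eq_zero {f : ℤ × ℤ → ℝ} (hf : f.support.Finite) : ∑ᶠ x, fd2 f x = 0 := by
  rw [fd2_eq_comp_add_sub]; exact finsum_comp_add_sub_eq_zero hf _

theorem finite_support_fd1 {f : ℤ × ℤ → ℝ} (hf : f.support.Finite) : (support (fd1 f)).Finite := by
  rw [fd1_eq_comp_add_sub]; exact finite_support_comp_add_sub hf _

theorem finite_support_fd2 {f : ℤ × ℤ → ℝ} (hf : f.support.Finite) : (support (fd2 f)).Finite := by
  rw [fd2_eq_comp_add_sub]; exact finite_support_comp_add_sub hf _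

-- `pev` as an algebra map (`latticeEval p = pev p` holds by `rfl`); its range is the algebra of
-- polynomial functions on the lattice.
def latticeEval : MvPolynomial (Fin 2) ℝ →ₐ[ℝ] ℤ × ℤ → ℝ :=
  AlgHom.pi fun x => aeval fun i => if i = 0 then (x.1 : ℝ) else (x.2 : ℝ)

theorem pev_comp_add (p : MvPolynomial (Fin 2) ℝ) (a : ℤ × ℤ) :
    (fun x => pev p (x + a)) = pev (bind₁ (fun i => X i + C (pev (X i) a)) p) := by
  ext x
  change aeval _ p = aeval _ (bind₁ _ p)
  rw [aeval_bind₁]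
  congr 1
  ext i
  fin_cases i <;> simp [pev]

theorem comp_add_mem_range {f : ℤ × ℤ → ℝ} (hf : f ∈ latticeEval.range) (a : ℤ × ℤ) :
    (fun x => f (x + a)) ∈ latticeEval.range := by
  obtain ⟨p, rfl⟩ := hf
  exact ⟨_, (pev_comp_add p a).symm⟩

theorem fd1_mem_range {f : ℤ × ℤ → ℝ} (hf : f ∈ latticeEval.range) : fd1 f ∈ latticeEval.range := by
  rw [fd1_eq_comp_add_sub]; exact sub_mem (comp_add_mem_range hf _) hf

theorem fd2_mem_range {f : ℤ × ℤ → ℝ} (hf : f ∈ latticeEval.range) : fd2 f ∈ latticeEval.range := by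
  rw [fd2_eq_comp_add_sub]; exact sub_mem (comp_add_mem_range hf _) hf

def skew (D : (ℤ × ℤ → ℝ) → ℤ × ℤ → ℝ) (u v : ℤ × ℤ → ℝ) : ℤ × ℤ → ℝ :=
  fun x => D u x * v x - u x * D v x

def crossDiff (u v : ℤ × ℤ → ℝ) : ℤ × ℤ → ℝ :=
  fun x => fd1 u x * fd2 v x - fd2 u x * fd1 v x

theorem crossDiff_mem_range {u v : ℤ × ℤ → ℝ} (hu : u ∈ latticeEval.range)
    (hv : v ∈ latticeEval.range) : crossDiff u v ∈ latticeEval.range :=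
  sub_mem (mul_mem (fd1_mem_range hu) (fd2_mem_range hv))
    (mul_mem (fd2_mem_range hu) (fd1_mem_range hv))

section Green

variable (A11 A12 A21 A22 B1 B2 : MvPolynomial (Fin 2) ℝ) (W u v : ℤ × ℤ → ℝ)

def flux1 : ℤ × ℤ → ℝ := fun x =>
  W x * (pev A11 x * skew bd1 u v x + pev A21 x * skew fd2 u v (x.1 - 1, x.2))

def flux2 : ℤ × ℤ → ℝ := fun x =>
  W x * (pev A12 x * skew fd1 u v (x.1, x.2 - 1) + pev A22 x * skew bd2 u v x)

theorem weight_mul_skew_Dop (x : ℤ × ℤ)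
    (h1 : W x * pev B1 x = fd1 (fun y => W y * pev A11 y) x + fd2 (fun y => W y * pev A12 y) x)
    (h2 : W x * pev B2 x = fd1 (fun y => W y * pev A21 y) x + fd2 (fun y => W y * pev A22 y) x) :
    W x * skew (Dop A11 A12 A21 A22 B1 B2) u v x =
      fd1 (flux1 A11 A21 W u v) x + fd2 (flux2 A12 A22 W u v) x
        + W x * pev A21 x * crossDiff u v (x.1 - 1, x.2)
        - W x * pev A12 x * crossDiff u v (x.1, x.2 - 1) := by
  obtain ⟨x1, x2⟩ := x
  simp only [skew, Dop, flux1, flux2, crossDiff, fd1, fd2, bd1, bd2, add_sub_cancel_right,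
    sub_add_cancel] at h1 h2 ⊢
  linear_combination (u (x1 + 1, x2) * v (x1, x2) - u (x1, x2) * v (x1 + 1, x2)) * h1
    + (u (x1, x2 + 1) * v (x1, x2) - u (x1, x2) * v (x1, x2 + 1)) * h2

end Green

theorem finsum_weight_mul_skew_Dop_eq_zero (A11 A12 A21 A22 B1 B2 : MvPolynomial (Fin 2) ℝ)
    (W : ℤ × ℤ → ℝ) (hW : W.support.Finite)
    (hsa1 : ∀ x : ℤ × ℤ, W x * pev B1 x =
      fd1 (fun y => W y * pev A11 y) x + fd2 (fun y => W y * pev A12 y) x)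
    (hsa2 : ∀ x : ℤ × ℤ, W x * pev B2 x =
      fd1 (fun y => W y * pev A21 y) x + fd2 (fun y => W y * pev A22 y) x)
    (hcross : ∀ g : MvPolynomial (Fin 2) ℝ,
      ∑ᶠ x : ℤ × ℤ, W x * pev A12 x * pev g (x.1, x.2 - 1) =
        ∑ᶠ x : ℤ × ℤ, W x * pev A21 x * pev g (x.1 - 1, x.2))
    {u v : ℤ × ℤ → ℝ} (hu : u ∈ latticeEval.range) (hv : v ∈ latticeEval.range) :
    ∑ᶠ x, W x * skew (Dop A11 A12 A21 A22 B1 B2) u v x = 0 := by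
  obtain ⟨G, hG : pev G = crossDiff u v⟩ := crossDiff_mem_range hu hv
  have hfin {f : ℤ × ℤ → ℝ} (hf : ∀ x, W x = 0 → f x = 0) : f.support.Finite :=
    hW.subset fun x hx h0 => hx (hf x h0)
  have hF1 : (flux1 A11 A21 W u v).support.Finite := hfin fun x h0 => by simp [flux1, h0]
  have hF2 : (flux2 A12 A22 W u v).support.Finite := hfin fun x h0 => by simp [flux2, h0]
  have hdiv := (finite_support_fd1 hF1).union (finite_support_fd2 hF2) |>.subset (support_add _ _)
  have hC1 := hfin (f := fun x => W x * pev A21 x * crossDiff u v (x.1 - 1, x.2))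
    fun x h0 => by simp [h0]
  have hC2 := hfin (f := fun x => W x * pev A12 x * crossDiff u v (x.1, x.2 - 1))
    fun x h0 => by simp [h0]
  rw [finsum_congr fun x => weight_mul_skew_Dop A11 A12 A21 A22 B1 B2 W u v x (hsa1 x) (hsa2 x),
    finsum_sub_distrib (hdiv.union hC1 |>.subset (support_add _ _)) hC2,
    finsum_add_distrib hdiv hC1,
    finsum_add_distrib (finite_support_fd1 hF1) (finite_support_fd2 hF2),
    finsum_fd1_eq_zero hF1, finsum_fd2_eq_zero hF2, ← hG, hcross, add_zero, zero_add, sub_self]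

/-- if `W·𝒟` is self-adjoint, `W` is finitely supported, and the
cross-condition `ℒ(A₁₂ g(·−e₂)) = ℒ(A₂₁ g(·−e₁))` holds for all polynomials `g`, then
polynomial eigenfunctions of `𝒟` with distinct eigenvalues are orthogonal
with respect to `W`. -/
theorem stmt11 (A11 A12 A21 A22 B1 B2 : MvPolynomial (Fin 2) ℝ)
    (W : ℤ × ℤ → ℝ) (hW : (Function.support W).Finite)
    (hsa1 : ∀ x : ℤ × ℤ, W x * pev B1 x =
      fd1 (fun y => W y * pev A11 y) x + fd2 (fun y => W y * pev A12 y) x)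
    (hsa2 : ∀ x : ℤ × ℤ, W x * pev B2 x =
      fd1 (fun y => W y * pev A21 y) x + fd2 (fun y => W y * pev A22 y) x)
    (hcross : ∀ g : MvPolynomial (Fin 2) ℝ,
      ∑ᶠ x : ℤ × ℤ, W x * pev A12 x * pev g (x.1, x.2 - 1) =
        ∑ᶠ x : ℤ × ℤ, W x * pev A21 x * pev g (x.1 - 1, x.2))
    (u v : MvPolynomial (Fin 2) ℝ) (lam mu : ℝ) (hlm : lam ≠ mu)
    (hu : Dop A11 A12 A21 A22 B1 B2 (pev u) = (fun x => lam * pev u x))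
    (hv : Dop A11 A12 A21 A22 B1 B2 (pev v) = (fun x => mu * pev v x)) :
    ∑ᶠ x : ℤ × ℤ, W x * pev u x * pev v x = 0 := by
  have hsym := finsum_weight_mul_skew_Dop_eq_zero A11 A12 A21 A22 B1 B2 W hW hsa1 hsa2 hcross
    (u := pev u) (v := pev v) ⟨u, rfl⟩ ⟨v, rfl⟩
  have heigen : ∀ x, W x * skew (Dop A11 A12 A21 A22 B1 B2) (pev u) (pev v) x =
      (lam - mu) * (W x * pev u x * pev v x) := fun x => by
    simp only [skew, hu, hv]; ring
  rw [finsum_congr heigen, ← mul_finsum] at hsym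
  exact (mul_eq_zero.mp hsym).resolve_left (sub_ne_zero.mpr hlm)
end
end

section
/- Let a ∈ ℝ and let A₁₁, A₁₂, A₂₁, A₂₂ be real polynomials in two variables of the form A₁₁(x) = a x₁² + p₁(x), A₁₂(x) = a x₁x₂ + p₂(x), A₂₁(x) = a x₁x₂ + p₃(x), A₂₂(x) = a x₂² + p₄(x), where each pᵢ has total degree at most 1. If A₁₁(0,t) = 0 and A₂₁(0,t) = 0 for all t ∈ ℝ, and A₁₂(t,0) = 0 and A₂₂(t,0) = 0 for all t ∈ ℝ, then there exist real constants e₁, e₂, e₃, e₄ such that A₁₁(x) = x₁(a x₁ + e₁), A₂₁(x) = x₁(a x₂ + e₂), A₁₂(x) = x₂(a x₁ + e₃), and A₂₂(x) = x₂(a x₂ + e₄). -/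
open MvPolynomial

noncomputable section

lemma linRep (p : MvPolynomial (Fin 2) ℝ) (hp : p.totalDegree ≤ 1) :
    p = C (coeff 0 p) + C (coeff (Finsupp.single 0 1) p) * X 0
      + C (coeff (Finsupp.single 1 1) p) * X 1 := by
  ext m
  simp only [coeff_add, coeff_C, coeff_C_mul, coeff_X']
  by_cases h2 : 1 < m 0 + m 1
  · have hz : coeff m p = 0 := by
      apply coeff_eq_zero_of_totalDegree_lt
      calc p.totalDegree ≤ 1 := hp
        _ < m 0 + m 1 := h2
        _ = ∑ i ∈ m.support, m i := by
            rw [Finset.sum_subset (Finset.subset_univ m.support)]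
            · simp [Fin.sum_univ_two]
            · intro i _ hi; simpa using (Finsupp.notMem_support_iff.mp hi)
    rw [hz]
    have h0 : ¬ (0 : Fin 2 →₀ ℕ) = m := by
      rintro rfl; simp at h2
    have ha : ¬ Finsupp.single (0 : Fin 2) 1 = m := by
      rintro rfl; simp at h2
    have hb : ¬ Finsupp.single (1 : Fin 2) 1 = m := by
      rintro rfl; simp at h2
    simp [h0, ha, hb]
  · push_neg at h2
    have hm : m = Finsupp.single 0 (m 0) + Finsupp.single 1 (m 1) := by
      ext i; fin_cases i <;> simp
    have hm0 : m 0 = 0 ∨ m 0 = 1 := by omega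
    have hm1 : m 1 = 0 ∨ m 1 = 1 := by omega
    rcases hm0 with h0 | h0 <;> rcases hm1 with h1 | h1 <;>
      [skip; skip; skip; omega] <;>
      rw [h0, h1] at hm <;> simp at hm <;> subst hm <;>
      simp [Finsupp.single_eq_single_iff, eq_comm]

lemma lin_zero {c b : ℝ} (h : ∀ t : ℝ, c + b * t = 0) : c = 0 ∧ b = 0 := by
  have h0 := h 0
  have h1 := h 1
  constructor <;> nlinarith

/-- if the coefficients have the admissible quadratic parts and vanish on
the coordinate axes as required for self-adjointness, then they factor as
`A₁₁ = x₁(a x₁ + e₁)`, `A₂₁ = x₁(a x₂ + e₂)`, `A₁₂ = x₂(a x₁ + e₃)`,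
`A₂₂ = x₂(a x₂ + e₄)`. -/
theorem stmt12 (a : ℝ) (A11 A12 A21 A22 p1 p2 p3 p4 : MvPolynomial (Fin 2) ℝ)
    (hp1 : p1.totalDegree ≤ 1) (hp2 : p2.totalDegree ≤ 1)
    (hp3 : p3.totalDegree ≤ 1) (hp4 : p4.totalDegree ≤ 1)
    (hA11 : A11 = C a * X 0 ^ 2 + p1)
    (hA12 : A12 = C a * (X 0 * X 1) + p2)
    (hA21 : A21 = C a * (X 0 * X 1) + p3)
    (hA22 : A22 = C a * X 1 ^ 2 + p4)
    (h11 : ∀ t : ℝ, eval (fun i => if i = 0 then 0 else t) A11 = 0)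
    (h21 : ∀ t : ℝ, eval (fun i => if i = 0 then 0 else t) A21 = 0)
    (h12 : ∀ t : ℝ, eval (fun i => if i = 0 then t else 0) A12 = 0)
    (h22 : ∀ t : ℝ, eval (fun i => if i = 0 then t else 0) A22 = 0) :
    ∃ e1 e2 e3 e4 : ℝ,
      A11 = X 0 * (C a * X 0 + C e1) ∧
      A21 = X 0 * (C a * X 1 + C e2) ∧
      A12 = X 1 * (C a * X 0 + C e3) ∧
      A22 = X 1 * (C a * X 1 + C e4) := by
  rw [linRep p1 hp1] at hA11
  rw [linRep p2 hp2] at hA12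
  rw [linRep p3 hp3] at hA21
  rw [linRep p4 hp4] at hA22
  refine ⟨coeff (Finsupp.single 0 1) p1, coeff (Finsupp.single 0 1) p3,
    coeff (Finsupp.single 1 1) p2, coeff (Finsupp.single 1 1) p4, ?_, ?_, ?_, ?_⟩
  · obtain ⟨hc, hb⟩ := lin_zero (c := coeff 0 p1) (b := coeff (Finsupp.single 1 1) p1)
      (fun t => by have := h11 t; rw [hA11] at this; simpa using this)
    rw [hA11, hc, hb, map_zero]; ring
  · obtain ⟨hc, hb⟩ := lin_zero (c := coeff 0 p3) (b := coeff (Finsupp.single 1 1) p3)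
      (fun t => by have := h21 t; rw [hA21] at this; simpa using this)
    rw [hA21, hc, hb, map_zero]; ring
  · obtain ⟨hc, hb⟩ := lin_zero (c := coeff 0 p2) (b := coeff (Finsupp.single 0 1) p2)
      (fun t => by have := h12 t; rw [hA12] at this; simpa using this)
    rw [hA12, hc, hb, map_zero]; ring
  · obtain ⟨hc, hb⟩ := lin_zero (c := coeff 0 p4) (b := coeff (Finsupp.single 0 1) p4)
      (fun t => by have := h22 t; rw [hA22] at this; simpa using this)
    rw [hA22, hc, hb, map_zero]; ring
end
end

section
/- Let N ∈ ℕ and p₁, p₂ > 0 with p₁ + p₂ < 1, and define W : ℤ × ℤ → ℝ by W(x₁,x₂) = N!/(x₁! x₂! (N−x₁−x₂)!) · p₁^{x₁} p₂^{x₂} (1−p₁−p₂)^{N−x₁−x₂} if x₁ ≥ 0, x₂ ≥ 0 and x₁+x₂ ≤ N, and W(x₁,x₂) = 0 otherwise. With the coefficients A₁₁(x) = (1−p₁)x₁, A₁₂(x) = −p₁x₂, A₂₁(x) = −p₂x₁, A₂₂(x) = (1−p₂)x₂, B₁(x) = p₁(N−x₁) − (1−p₁)x₁, B₂(x) = p₂(N−x₂)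 − (1−p₂)x₂, the self-adjointness relations hold pointwise on all of ℤ × ℤ: W·B₁ = Δ₁(W·A₁₁) + Δ₂(W·A₁₂) and W·B₂ = Δ₁(W·A₂₁) + Δ₂(W·A₂₂). -/
noncomputable section

/-!
The two relations are linear combinations of the Pearson-type recurrences
`(x₁ + 1) W(x + e₁) q = p₁ (N - x₁ - x₂) W(x)` and `(x₂ + 1) W(x + e₂) q = p₂ (N - x₁ - x₂) W(x)`,
`q = 1 - p₁ - p₂`, which follow from `(m + 1)! = (m + 1) m!` inside the triangle. On its boundary
one side of each recurrence vanishes through its factor `xᵢ + 1` or `N - x₁ - x₂`.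
-/

open scoped Nat

namespace Krawtchouk

def trinomialTerm (N : ℕ) (p₁ p₂ : ℝ) (m k r : ℕ) : ℝ :=
  N ! / (m ! * k ! * r !) * (p₁ ^ m * p₂ ^ k * (1 - p₁ - p₂) ^ r)

def trinomialWeight (N : ℕ) (p₁ p₂ : ℝ) (x : ℤ × ℤ) : ℝ :=
  if 0 ≤ x.1 ∧ 0 ≤ x.2 ∧ x.1 + x.2 ≤ (N : ℤ) then
    trinomialTerm N p₁ p₂ x.1.toNat x.2.toNat (N - x.1.toNat - x.2.toNat)
  else 0

variable (N : ℕ) (p₁ p₂ : ℝ)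

theorem trinomialTerm_comm (m k r : ℕ) :
    trinomialTerm N p₁ p₂ m k r = trinomialTerm N p₂ p₁ k m r := by
  unfold trinomialTerm
  ring

theorem succ_mul_trinomialTerm_succ (m k r : ℕ) :
    (m + 1) * trinomialTerm N p₁ p₂ (m + 1) k r * (1 - p₁ - p₂) =
      p₁ * (r + 1) * trinomialTerm N p₁ p₂ m k (r + 1) := by
  unfold trinomialTerm
  rw [Nat.factorial_succ m, Nat.factorial_succ r]
  push_cast
  field_simp
  ring

theorem trinomialWeight_of_nat {m k : ℕ} (h : m + k ≤ N) :
    trinomialWeight N p₁ p₂ (m, k) = trinomialTerm N p₁ p₂ m k (N - m - k) := by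
  rw [trinomialWeight, if_pos (by omega)]
  simp only [Int.toNat_natCast]

theorem trinomialWeight_eq_zero {x : ℤ × ℤ} (h : ¬(0 ≤ x.1 ∧ 0 ≤ x.2 ∧ x.1 + x.2 ≤ (N : ℤ))) :
    trinomialWeight N p₁ p₂ x = 0 :=
  if_neg h

theorem trinomialWeight_swap (x : ℤ × ℤ) :
    trinomialWeight N p₁ p₂ x.swap = trinomialWeight N p₂ p₁ x := by
  obtain ⟨a, b⟩ := x
  by_cases h : 0 ≤ a ∧ 0 ≤ b ∧ a + b ≤ (N : ℤ)
  · obtain ⟨m, rfl⟩ := Int.eq_ofNat_of_zero_le h.1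
    obtain ⟨k, rfl⟩ := Int.eq_ofNat_of_zero_le h.2.1
    have hmk : m + k ≤ N := by omega
    rw [Prod.swap_prod_mk, trinomialWeight_of_nat N p₁ p₂ (by omega),
      trinomialWeight_of_nat N p₂ p₁ hmk, trinomialTerm_comm, Nat.sub_right_comm]
  · rw [trinomialWeight_eq_zero N p₁ p₂ (by simp only [Prod.swap_prod_mk]; omega),
      trinomialWeight_eq_zero N p₂ p₁ h]

theorem succ_mul_trinomialWeight_add_fst (x : ℤ × ℤ) :
    (x.1 + 1) * trinomialWeight N p₁ p₂ (x.1 + 1, x.2) * (1 - p₁ - p₂) =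
      p₁ * (N - x.1 - x.2) * trinomialWeight N p₁ p₂ x := by
  obtain ⟨a, b⟩ := x
  dsimp only
  by_cases h : 0 ≤ a ∧ 0 ≤ b ∧ a + b ≤ (N : ℤ)
  · obtain ⟨m, rfl⟩ := Int.eq_ofNat_of_zero_le h.1
    obtain ⟨k, rfl⟩ := Int.eq_ofNat_of_zero_le h.2.1
    rcases Nat.exists_eq_add_of_le (show m + k ≤ N by omega) with ⟨_ | r, rfl⟩
    · rw [trinomialWeight_eq_zero _ p₁ p₂ (by dsimp only; omega)]
      push_cast
      ring
    · have hx := trinomialWeight_of_nat (m + k + (r + 1)) p₁ p₂ (m := m) (k := k) (by omega)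
      have hx₁ := trinomialWeight_of_nat (m + k + (r + 1)) p₁ p₂ (m := m + 1) (k := k) (by omega)
      push_cast at hx₁
      rw [hx, hx₁, show m + k + (r + 1) - m - k = r + 1 by omega,
        show m + k + (r + 1) - (m + 1) - k = r by omega]
      push_cast
      linear_combination succ_mul_trinomialTerm_succ _ p₁ p₂ m k r
  · rw [trinomialWeight_eq_zero N p₁ p₂ (x := (a, b)) h]
    by_cases ha : a = -1
    · subst ha
      ring
    · rw [trinomialWeight_eq_zero N p₁ p₂ (by dsimp only; omega)]
      ring

theorem succ_mul_trinomialWeight_add_snd (x : ℤ × ℤ) :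
    (x.2 + 1) * trinomialWeight N p₁ p₂ (x.1, x.2 + 1) * (1 - p₁ - p₂) =
      p₂ * (N - x.1 - x.2) * trinomialWeight N p₁ p₂ x := by
  obtain ⟨a, b⟩ := x
  have h := succ_mul_trinomialWeight_add_fst N p₂ p₁ (b, a)
  have e₁ := trinomialWeight_swap N p₂ p₁ (a, b + 1)
  have e₀ := trinomialWeight_swap N p₂ p₁ (a, b)
  simp only [Prod.swap_prod_mk] at h e₁ e₀
  rw [e₁, e₀] at h
  linear_combination h

end Krawtchouk

open Krawtchouk in
theorem stmt17_general (N : ℕ) (p1 p2 : ℝ)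
    (hp : p1 + p2 < 1)
    (W : ℤ × ℤ → ℝ)
    (hW : W = fun x => if 0 ≤ x.1 ∧ 0 ≤ x.2 ∧ x.1 + x.2 ≤ (N : ℤ) then
      (N.factorial : ℝ) /
          ((x.1.toNat.factorial : ℝ) * (x.2.toNat.factorial : ℝ) *
            ((N - x.1.toNat - x.2.toNat).factorial : ℝ)) *
        (p1 ^ x.1.toNat * p2 ^ x.2.toNat *
          (1 - p1 - p2) ^ (N - x.1.toNat - x.2.toNat)) else 0) :
    (∀ x : ℤ × ℤ, W x * (p1 * ((N : ℝ) - (x.1 : ℝ)) - (1 - p1) * (x.1 : ℝ)) =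
      fd1 (fun y => W y * ((1 - p1) * (y.1 : ℝ))) x +
        fd2 (fun y => W y * (-p1 * (y.2 : ℝ))) x) ∧
    (∀ x : ℤ × ℤ, W x * (p2 * ((N : ℝ) - (x.2 : ℝ)) - (1 - p2) * (x.2 : ℝ)) =
      fd1 (fun y => W y * (-p2 * (y.1 : ℝ))) x +
        fd2 (fun y => W y * ((1 - p2) * (y.2 : ℝ))) x) := by
  obtain rfl : W = trinomialWeight N p1 p2 := hW
  have hq : 1 - p1 - p2 ≠ 0 := by linarith
  have h₁ := succ_mul_trinomialWeight_add_fst N p1 p2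
  have h₂ := succ_mul_trinomialWeight_add_snd N p1 p2
  refine ⟨fun x => ?_, fun x => ?_⟩ <;>
    refine mul_left_cancel₀ hq ?_ <;> simp only [fd1, fd2] <;> push_cast
  · linear_combination (p1 - 1) * h₁ x + p1 * h₂ x
  · linear_combination p2 * h₁ x + (p2 - 1) * h₂ x

/-- the trinomial weight
`W(x) = N!/(x₁!x₂!(N−x₁−x₂)!) p₁^{x₁}p₂^{x₂}(1−p₁−p₂)^{N−x₁−x₂}` on the triangle
`{x ∈ ℕ² : x₁+x₂ ≤ N}` (extended by `0`) makes `W·𝒟` self-adjoint for the two-variable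
Krawtchouk difference operator. -/
theorem stmt17 (N : ℕ) (p1 p2 : ℝ)
    (hp1 : 0 < p1) (hp2 : 0 < p2) (hp : p1 + p2 < 1)
    (W : ℤ × ℤ → ℝ)
    (hW : W = fun x => if 0 ≤ x.1 ∧ 0 ≤ x.2 ∧ x.1 + x.2 ≤ (N : ℤ) then
      (N.factorial : ℝ) /
          ((x.1.toNat.factorial : ℝ) * (x.2.toNat.factorial : ℝ) *
            ((N - x.1.toNat - x.2.toNat).factorial : ℝ)) *
        (p1 ^ x.1.toNat * p2 ^ x.2.toNat *
          (1 - p1 - p2) ^ (N - x.1.toNat - x.2.toNat)) else 0) :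
    (∀ x : ℤ × ℤ, W x * (p1 * ((N : ℝ) - (x.1 : ℝ)) - (1 - p1) * (x.1 : ℝ)) =
      fd1 (fun y => W y * ((1 - p1) * (y.1 : ℝ))) x +
        fd2 (fun y => W y * (-p1 * (y.2 : ℝ))) x) ∧
    (∀ x : ℤ × ℤ, W x * (p2 * ((N : ℝ) - (x.2 : ℝ)) - (1 - p2) * (x.2 : ℝ)) =
      fd1 (fun y => W y * (-p2 * (y.1 : ℝ))) x +
        fd2 (fun y => W y * ((1 - p2) * (y.2 : ℝ))) x) :=
  stmt17_general N p1 p2 hp W hW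
end
end

section
/- Let N ∈ ℕ and σ₁, σ₂, σ₃ > −1 be real numbers, and define W : ℤ × ℤ → ℝ by W(x₁,x₂) = [Γ(x₁+σ₁+1)/(Γ(σ₁+1)·x₁!)] · [Γ(x₂+σ₂+1)/(Γ(σ₂+1)·x₂!)] · [Γ(N−x₁−x₂+σ₃+1)/(Γ(σ₃+1)·(N−x₁−x₂)!)] if x₁ ≥ 0, x₂ ≥ 0 and x₁+x₂ ≤ N, and W(x₁,x₂) = 0 otherwise. With the coefficients of the two-variable Hahn difference equation, A₁₁(x) = x₁(N−x₁+σ₂+σ₃+2), A₁₂(x) = −x₂(x₁+σ₁+1), A₂₁(x) = −x₁(x₂+σ₂+1), A₂₂(x) = x₂(N−x₂+σ₁+σ₃+2), B₁(x) = (N−x₁)(σ₁+1) − x₁(σ₂+σ₃+2), B₂(x) = (N−x₂)(σ₂+1) − x₂(σ₁+σ₃+2), the self-adjointness relations hold pointwise on all of ℤ × ℤ: W·B₁ = Δ₁(W·A₁₁) + Δ₂(W·A₁₂) and W·B₂ = Δ₁(W·A₂₁) + Δ₂(W·A₂₂). -/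
/-! Each factor of `W` is a one-variable weight `u` with `u (n + 1) * (n + 1) = u n * (n + σ + 1)`,
and after extending it by `0` to the negative integers this recurrence holds on all of `ℤ`
(at `n = -1` both sides vanish). Writing `W x = u₁ x₁ * u₂ x₂ * u₃ (N - x₁ - x₂)` on all of `ℤ²`,
each relation becomes a linear combination of the three recurrences, with no boundary cases;
the second relation is the first one for the weight reflected in the diagonal. -/

noncomputable section

def PearsonRecurrence (σ : ℝ) (u : ℤ → ℝ) : Prop :=
  ∀ n : ℤ, u (n + 1) * (n + 1) = u n * (n + σ + 1)

def simplexWeight (u v w : ℤ → ℝ) (N : ℤ) (x : ℤ × ℤ) : ℝ :=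
  u x.1 * v x.2 * w (N - x.1 - x.2)

theorem fd1_apply_swap (F : ℤ × ℤ → ℝ) (x : ℤ × ℤ) :
    fd1 F x.swap = fd2 (fun y => F y.swap) x := rfl

theorem fd2_apply_swap (F : ℤ × ℤ → ℝ) (x : ℤ × ℤ) :
    fd2 F x.swap = fd1 (fun y => F y.swap) x := rfl

theorem simplexWeight_swap (u v w : ℤ → ℝ) (N : ℤ) (x : ℤ × ℤ) :
    simplexWeight v u w N x.swap = simplexWeight u v w N x := by
  simp only [simplexWeight, Prod.fst_swap, Prod.snd_swap]
  rw [sub_right_comm, mul_comm (v _)]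

section
variable {u v w : ℤ → ℝ} {σ1 σ2 σ3 : ℝ}

theorem simplexWeight_first_relation (hu : PearsonRecurrence σ1 u)
    (hv : PearsonRecurrence σ2 v) (hw : PearsonRecurrence σ3 w) (N : ℤ) (x : ℤ × ℤ) :
    simplexWeight u v w N x * (((N : ℝ) - x.1) * (σ1 + 1) - x.1 * (σ2 + σ3 + 2)) =
      fd1 (fun y => simplexWeight u v w N y * (y.1 * ((N : ℝ) - y.1 + σ2 + σ3 + 2))) x +
        fd2 (fun y => simplexWeight u v w N y * (-y.2 * (y.1 + σ1 + 1))) x := by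
  obtain ⟨a, b⟩ := x
  have hw' := hw (N - a - b - 1)
  rw [sub_add_cancel] at hw'
  simp only [fd1, fd2, simplexWeight]
  rw [show N - (a + 1) - b = N - a - b - 1 by ring, show N - a - (b + 1) = N - a - b - 1 by ring]
  push_cast at hw' ⊢
  linear_combination -v b * w (N - a - b - 1) * (↑N - ↑a + σ2 + σ3 + 1) * hu a
    + u a * w (N - a - b - 1) * (↑a + σ1 + 1) * hv b + u a * v b * (↑a + σ1 + 1) * hw'

theorem simplexWeight_second_relation (hu : PearsonRecurrence σ1 u)
    (hv : PearsonRecurrence σ2 v) (hw : PearsonRecurrence σ3 w) (N : ℤ) (x : ℤ × ℤ) :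
    simplexWeight u v w N x * (((N : ℝ) - x.2) * (σ2 + 1) - x.2 * (σ1 + σ3 + 2)) =
      fd1 (fun y => simplexWeight u v w N y * (-y.1 * (y.2 + σ2 + 1))) x +
        fd2 (fun y => simplexWeight u v w N y * (y.2 * ((N : ℝ) - y.2 + σ1 + σ3 + 2))) x := by
  have h := simplexWeight_first_relation hv hu hw N x.swap
  rw [fd1_apply_swap, fd2_apply_swap] at h
  rw [add_comm (fd1 _ _)]
  simpa only [simplexWeight_swap, Prod.fst_swap, Prod.snd_swap] using h

end

def hahnFactor (σ : ℝ) (n : ℤ) : ℝ :=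
  if 0 ≤ n then Real.Gamma (n + σ + 1) / (Real.Gamma (σ + 1) * n.toNat.factorial) else 0

theorem hahnFactor_natCast (σ : ℝ) (k : ℕ) :
    hahnFactor σ k = Real.Gamma (k + σ + 1) / (Real.Gamma (σ + 1) * k.factorial) := by
  simp [hahnFactor]

theorem pearsonRecurrence_hahnFactor {σ : ℝ} (hσ : -1 < σ) :
    PearsonRecurrence σ (hahnFactor σ) := by
  intro n
  rcases le_or_gt 0 n with hn | hn
  · lift n to ℕ using hn
    have hk : (n : ℝ) + σ + 1 ≠ 0 := by have := n.cast_nonneg (α := ℝ); linarith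
    rw [← Nat.cast_succ, hahnFactor_natCast, hahnFactor_natCast, Nat.cast_succ,
      show (n : ℝ) + 1 + σ + 1 = (n + σ + 1) + 1 by ring, Real.Gamma_add_one hk,
      Nat.factorial_succ]
    push_cast
    field_simp
  · have hzero : hahnFactor σ n = 0 := if_neg hn.not_ge
    rw [hzero, zero_mul]
    rcases (show n = -1 ∨ n + 1 < 0 by omega) with rfl | hn'
    · norm_num
    · rw [hahnFactor, if_neg hn'.not_ge, zero_mul]

theorem hahnWeight_eq_simplexWeight (N : ℕ) (σ1 σ2 σ3 : ℝ) :
    (fun x : ℤ × ℤ => if 0 ≤ x.1 ∧ 0 ≤ x.2 ∧ x.1 + x.2 ≤ (N : ℤ) then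
      (Real.Gamma ((x.1 : ℝ) + σ1 + 1) / (Real.Gamma (σ1 + 1) * (x.1.toNat.factorial : ℝ))) *
        (Real.Gamma ((x.2 : ℝ) + σ2 + 1) / (Real.Gamma (σ2 + 1) * (x.2.toNat.factorial : ℝ))) *
        (Real.Gamma ((N : ℝ) - (x.1 : ℝ) - (x.2 : ℝ) + σ3 + 1) /
          (Real.Gamma (σ3 + 1) * (((N - x.1.toNat - x.2.toNat).factorial : ℝ))))
      else 0) =
      simplexWeight (hahnFactor σ1) (hahnFactor σ2) (hahnFactor σ3) N := by
  funext ⟨a, b⟩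
  simp only [simplexWeight, hahnFactor]
  by_cases h : 0 ≤ a ∧ 0 ≤ b ∧ a + b ≤ (N : ℤ)
  · obtain ⟨ha, hb, hab⟩ := h
    have hc : (N - a - b : ℤ).toNat = N - a.toNat - b.toNat := by omega
    rw [if_pos ⟨ha, hb, hab⟩, if_pos ha, if_pos hb, if_pos (by omega), hc]
    push_cast
    rfl
  · rw [if_neg h]
    by_cases ha : 0 ≤ a
    · by_cases hb : 0 ≤ b
      · rw [if_neg (show ¬ 0 ≤ (N : ℤ) - a - b by omega), mul_zero]
      · rw [if_neg hb, mul_zero, zero_mul]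
    · rw [if_neg ha, zero_mul, zero_mul]

/-- the Hahn weight
`W(x) = Γ(x₁+σ₁+1)/(Γ(σ₁+1)x₁!) · Γ(x₂+σ₂+1)/(Γ(σ₂+1)x₂!) ·
Γ(N−x₁−x₂+σ₃+1)/(Γ(σ₃+1)(N−x₁−x₂)!)` on the triangle `{x ∈ ℕ² : x₁+x₂ ≤ N}`
(extended by `0`) makes `W·𝒟` self-adjoint for the two-variable Hahn difference
operator. -/
theorem stmt18 (N : ℕ) (σ1 σ2 σ3 : ℝ)
    (hσ1 : -1 < σ1) (hσ2 : -1 < σ2) (hσ3 : -1 < σ3)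
    (W : ℤ × ℤ → ℝ)
    (hW : W = fun x => if 0 ≤ x.1 ∧ 0 ≤ x.2 ∧ x.1 + x.2 ≤ (N : ℤ) then
      (Real.Gamma ((x.1 : ℝ) + σ1 + 1) / (Real.Gamma (σ1 + 1) * (x.1.toNat.factorial : ℝ))) *
        (Real.Gamma ((x.2 : ℝ) + σ2 + 1) / (Real.Gamma (σ2 + 1) * (x.2.toNat.factorial : ℝ))) *
        (Real.Gamma ((N : ℝ) - (x.1 : ℝ) - (x.2 : ℝ) + σ3 + 1) /
          (Real.Gamma (σ3 + 1) * (((N - x.1.toNat - x.2.toNat).factorial : ℝ))))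
      else 0) :
    (∀ x : ℤ × ℤ,
      W x * (((N : ℝ) - (x.1 : ℝ)) * (σ1 + 1) - (x.1 : ℝ) * (σ2 + σ3 + 2)) =
        fd1 (fun y => W y * ((y.1 : ℝ) * ((N : ℝ) - (y.1 : ℝ) + σ2 + σ3 + 2))) x +
          fd2 (fun y => W y * (-(y.2 : ℝ) * ((y.1 : ℝ) + σ1 + 1))) x) ∧
    (∀ x : ℤ × ℤ,
      W x * (((N : ℝ) - (x.2 : ℝ)) * (σ2 + 1) - (x.2 : ℝ) * (σ1 + σ3 + 2)) =
        fd1 (fun y => W y * (-(y.1 : ℝ) * ((y.2 : ℝ) + σ2 + 1))) x +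
          fd2 (fun y => W y * ((y.2 : ℝ) * ((N : ℝ) - (y.2 : ℝ) + σ1 + σ3 + 2))) x) := by
  rw [hW, hahnWeight_eq_simplexWeight]
  have h1 := pearsonRecurrence_hahnFactor hσ1
  have h2 := pearsonRecurrence_hahnFactor hσ2
  have h3 := pearsonRecurrence_hahnFactor hσ3
  refine ⟨fun x => ?_, fun x => ?_⟩
  · simpa only [Int.cast_natCast] using simplexWeight_first_relation h1 h2 h3 N x
  · simpa only [Int.cast_natCast] using simplexWeight_second_relation h1 h2 h3 N x
end
end
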